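/- arXiv:2206.13290 — 4 statements merged into one kernel-verified Lean document; each statement's English description precedes it below -/
import Mathlib

section
/- (Theorem 1, constant learning rate) Suppose Adam is run with constant parameters α_k = α > 0, β_{1k} = β₁ ∈ (0,1), β_{2k} = β₂ ∈ [0,1), and let θ* ∈ ℝ^d be a stationary point of f (∇f(θ*) = 0). Then for all k ∈ ℕ: E[m_kᵀ(θ_k − θ*)] ≤ D(θ*)M^{1/4}/(v_*^{1/4} β₁) · √(σ²/b + G²) + α√(1−β₂^{k+1})/(2√(v_*) β₁ (1−β₁^{k+1})) · (σ²/b + G²) + ((1−β₁)/β₁) D(θ*) G + (1−β₁) D(θ*) (B + √(σ²/b + G²)); and for all θ ∈ ℝ^d and all k ∈ ℕ: E[∇f(θ_k)ᵀ(θ_k − θ)] ≤ D(θ)M^{1/4}/(v_*^{1/4} β₁) · √(σ²/b + G²) + α√(1−β₂^{k+1})/(2√(v_*) β₁ (1−β₁^{k+1})) · (σ²/b + G²) + ((1−β₁)/β₁) D(θ) G + (1/β₁ + 2(1−β₁)) D(θ) (B + √(σ²/b + G²)). -/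
/-!
Since `E[g_k | θ_k] = ∇f(θ_k)` and `∇f(θ_k)` is `θ_k`-measurable, the cross term in
`‖g_k‖² = ‖g_k - ∇f(θ_k)‖² + 2⟪∇f(θ_k), g_k⟫ - ‖∇f(θ_k)‖²` has expectation `E‖∇f(θ_k)‖²`, so
`E‖g_k‖² ≤ σ²/b + G²` and, by Jensen, `E‖g_k‖ ≤ S := √(σ²/b + G²)`. The momentum `m_k` is a convex
combination of `m_{k-1}` and `g_k`, hence `E‖m_k‖ ≤ S` too, and Cauchy–Schwarz with
`‖θ_k - θ‖ ≤ D(θ)` gives `E⟪m_k, θ_k - θ*⟫ ≤ D(θ*) S`. This is at most the first term of the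
bound, because `v_* ≤ v_{0,i} ≤ M` makes `M^{1/4} / (v_*^{1/4} β₁) ≥ 1` (in dimension zero the
expectation vanishes). Likewise `E⟪∇f(θ_k), θ_k - θ⟫ ≤ D(θ) G ≤ D(θ) (B + S) / β₁`. All remaining
terms of the bounds are nonnegative.
-/

open MeasureTheory Filter Real

theorem rpow_nonneg_of_abs_le_half {y : ℝ} (hy : |y| ≤ 1 / 2) (x : ℝ) : 0 ≤ x ^ y := by
  rcases lt_or_ge x 0 with hx | hx
  · rw [rpow_def_of_neg hx]
    obtain ⟨hy₁, hy₂⟩ := abs_le.mp hy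
    refine mul_nonneg (exp_pos _).le (cos_nonneg_of_neg_pi_div_two_le_of_le ?_ ?_) <;>
      nlinarith [pi_pos]
  · exact rpow_nonneg hx y

theorem mul_le_mul_rpow_div_mul_mul {D I S v M y β : ℝ} (hD : 0 ≤ D) (hIS : I ≤ S) (hS : 0 ≤ S)
    (hv : 0 < v) (hvM : v ≤ M) (hy : 0 ≤ y) (hβ : 0 < β) (hβ1 : β ≤ 1) :
    D * I ≤ D * M ^ y / (v ^ y * β) * S := by
  have hvy : 0 < v ^ y := rpow_pos_of_pos hv y
  have hratio : 1 ≤ M ^ y / (v ^ y * β) := by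
    rw [one_le_div (by positivity)]
    calc v ^ y * β ≤ v ^ y := mul_le_of_le_one_right hvy.le hβ1
      _ ≤ M ^ y := rpow_le_rpow hv.le hvM hy
  calc D * I ≤ D * S := mul_le_mul_of_nonneg_left hIS hD
    _ ≤ D * S * (M ^ y / (v ^ y * β)) := le_mul_of_one_le_right (by positivity) hratio
    _ = D * M ^ y / (v ^ y * β) * S := by ring

section Integral

variable {Ω : Type*} [MeasurableSpace Ω] {μ : Measure Ω}

theorem integral_le_sqrt_integral_sq [IsProbabilityMeasure μ] {X : Ω → ℝ} (hX : MemLp X 2 μ) :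
    ∫ ω, X ω ∂μ ≤ √(∫ ω, X ω ^ 2 ∂μ) := by
  have hvar := ProbabilityTheory.variance_nonneg X μ
  rw [ProbabilityTheory.variance_eq_sub hX] at hvar
  exact (Real.le_norm_self _).trans (abs_le_sqrt (by simpa using hvar))

theorem integral_le_of_ae_le_of_nonneg [IsProbabilityMeasure μ] {f : Ω → ℝ} {c : ℝ}
    (hf : ∀ᵐ ω ∂μ, 0 ≤ f ω) (hfc : ∀ᵐ ω ∂μ, f ω ≤ c) : ∫ ω, f ω ∂μ ≤ c := by
  have h := norm_integral_le_of_norm_le_const (μ := μ) (C := c) <| by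
    filter_upwards [hf, hfc] with ω h₀ h₁
    rwa [norm_of_nonneg h₀]
  rw [probReal_univ, mul_one] at h
  exact (Real.le_norm_self _).trans h

theorem le_of_ae_le_one_sub_mul_sq [IsProbabilityMeasure μ] {ι : Type*} [Nonempty ι]
    {v g : Ω → ι → ℝ} {β M c : ℝ} (hβ : 0 ≤ β) (hv : ∀ ω i, v ω i = (1 - β) * g ω i ^ 2)
    (hgM : ∀ᵐ ω ∂μ, ∀ i, g ω i ^ 2 ≤ M) (hcv : ∀ᵐ ω ∂μ, ∀ i, c ≤ v ω i) : c ≤ M := by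
  obtain ⟨ω, hgMω, hcvω⟩ := (hgM.and hcv).exists
  obtain ⟨i⟩ := ‹Nonempty ι›
  nlinarith [hgMω i, hcvω i, hv ω i, sq_nonneg (g ω i)]

variable {E : Type*} [NormedAddCommGroup E] [InnerProductSpace ℝ E]

theorem integral_inner_le_mul_integral_norm {X Y : Ω → E} {D : ℝ}
    (hX : Integrable (fun ω => ‖X ω‖) μ) (hY : ∀ᵐ ω ∂μ, ‖Y ω‖ ≤ D) :
    ∫ ω, inner ℝ (X ω) (Y ω) ∂μ ≤ D * ∫ ω, ‖X ω‖ ∂μ := by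
  rw [← integral_const_mul]
  calc ∫ ω, inner ℝ (X ω) (Y ω) ∂μ ≤ ∫ ω, ‖inner ℝ (X ω) (Y ω)‖ ∂μ :=
        (Real.le_norm_self _).trans (norm_integral_le_integral_norm _)
    _ ≤ ∫ ω, D * ‖X ω‖ ∂μ := by
        refine integral_mono_of_nonneg (ae_of_all _ fun _ => norm_nonneg _)
          (hX.const_mul D) ?_
        filter_upwards [hY] with ω hω
        rw [norm_eq_abs, mul_comm]
        exact (abs_real_inner_le_norm _ _).trans
          (mul_le_mul_of_nonneg_left hω (norm_nonneg _))

end Integral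

section ConditionalExpectation

variable {Ω E : Type*} {m mΩ : MeasurableSpace Ω} {μ : Measure Ω}
  [NormedAddCommGroup E] [InnerProductSpace ℝ E] [CompleteSpace E]
  {g F : Ω → E} {C : ℝ}

theorem integral_inner_eq_integral_norm_sq_of_condExp_ae_eq [IsFiniteMeasure μ] (hm : m ≤ mΩ)
    (hg : Integrable g μ) (hF : μ[g | m] =ᵐ[μ] F) (hFC : ∀ᵐ ω ∂μ, ‖F ω‖ ≤ C) :
    ∫ ω, inner ℝ (F ω) (g ω) ∂μ = ∫ ω, ‖F ω‖ ^ 2 ∂μ := by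
  have hFm : AEStronglyMeasurable[m] F μ :=
    stronglyMeasurable_condExp.aestronglyMeasurable.congr hF
  have hFg : Integrable (fun ω => inner ℝ (F ω) (g ω)) μ := by
    refine (hg.norm.const_mul C).mono' ((hFm.mono hm).inner hg.aestronglyMeasurable) ?_
    filter_upwards [hFC] with ω hω
    exact (norm_inner_le_norm _ _).trans (mul_le_mul_of_nonneg_right hω (norm_nonneg _))
  calc ∫ ω, inner ℝ (F ω) (g ω) ∂μ = ∫ ω, μ[fun ω => inner ℝ (F ω) (g ω) | m] ω ∂μ :=
        (integral_condExp hm).symm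
    _ = ∫ ω, inner ℝ (F ω) (F ω) ∂μ := by
        refine integral_congr_ae ?_
        filter_upwards [condExp_bilin_of_aestronglyMeasurable_left (innerSL ℝ) hFm hFg hg, hF]
          with ω h₁ h₂
        exact h₁.trans (congrArg _ h₂)
    _ = ∫ ω, ‖F ω‖ ^ 2 ∂μ := by simp only [real_inner_self_eq_norm_sq]

theorem integral_norm_sq_eq_add_of_condExp_ae_eq [IsFiniteMeasure μ] (hm : m ≤ mΩ) {B : ℝ}
    (hg : AEStronglyMeasurable g μ) (hgB : ∀ᵐ ω ∂μ, ‖g ω‖ ≤ B) (hF : μ[g | m] =ᵐ[μ] F)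
    (hFC : ∀ᵐ ω ∂μ, ‖F ω‖ ≤ C) :
    ∫ ω, ‖g ω‖ ^ 2 ∂μ = ∫ ω, ‖g ω - F ω‖ ^ 2 ∂μ + ∫ ω, ‖F ω‖ ^ 2 ∂μ := by
  have hFmeas : AEStronglyMeasurable F μ :=
    (stronglyMeasurable_condExp.aestronglyMeasurable.congr hF).mono hm
  have hg_int : Integrable g μ := .of_bound hg B hgB
  have hF2 : Integrable (fun ω => ‖F ω‖ ^ 2) μ := .of_bound (hFmeas.norm.pow 2) (C ^ 2) <| by
    filter_upwards [hFC] with ω hω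
    simpa using pow_le_pow_left₀ (norm_nonneg _) hω 2
  have hgF2 : Integrable (fun ω => ‖g ω - F ω‖ ^ 2) μ :=
    .of_bound ((hg.sub hFmeas).norm.pow 2) ((B + C) ^ 2) <| by
      filter_upwards [hgB, hFC] with ω h₁ h₂
      simpa using pow_le_pow_left₀ (norm_nonneg _) ((norm_sub_le _ _).trans (add_le_add h₁ h₂)) 2
  have hFg : Integrable (fun ω => inner ℝ (F ω) (g ω)) μ :=
    .of_bound (hFmeas.inner hg) (C * B) <| by
      filter_upwards [hgB, hFC] with ω h₁ h₂
      exact (norm_inner_le_norm _ _).trans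
        (mul_le_mul h₂ h₁ (norm_nonneg _) ((norm_nonneg _).trans h₂))
  have hpt : ∀ ω, ‖g ω‖ ^ 2 = ‖g ω - F ω‖ ^ 2 + (2 * inner ℝ (F ω) (g ω) - ‖F ω‖ ^ 2) := by
    intro ω
    rw [norm_sub_sq_real, real_inner_comm]
    ring
  rw [integral_congr_ae (ae_of_all _ hpt), integral_add hgF2 (by exact (hFg.const_mul 2).sub hF2),
    integral_sub (hFg.const_mul 2) hF2, integral_const_mul,
    integral_inner_eq_integral_norm_sq_of_condExp_ae_eq hm hg_int hF hFC]
  ring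

theorem integral_norm_le_sqrt_of_condExp_ae_eq [IsProbabilityMeasure μ] (hm : m ≤ mΩ) {B s : ℝ}
    (hg : AEStronglyMeasurable g μ) (hgB : ∀ᵐ ω ∂μ, ‖g ω‖ ≤ B) (hF : μ[g | m] =ᵐ[μ] F)
    (hFC : ∀ᵐ ω ∂μ, ‖F ω‖ ≤ C) (hvar : ∫ ω, ‖g ω - F ω‖ ^ 2 ∂μ ≤ s) :
    ∫ ω, ‖g ω‖ ∂μ ≤ √(s + C ^ 2) := by
  have hF2 : ∫ ω, ‖F ω‖ ^ 2 ∂μ ≤ C ^ 2 :=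
    integral_le_of_ae_le_of_nonneg (ae_of_all _ fun _ => by positivity)
      (hFC.mono fun _ h => pow_le_pow_left₀ (norm_nonneg _) h 2)
  calc ∫ ω, ‖g ω‖ ∂μ ≤ √(∫ ω, ‖g ω‖ ^ 2 ∂μ) :=
        integral_le_sqrt_integral_sq (.of_bound hg.norm B (by simpa using hgB))
    _ ≤ √(s + C ^ 2) := by
        rw [integral_norm_sq_eq_add_of_condExp_ae_eq hm hg hgB hF hFC]
        exact sqrt_le_sqrt (add_le_add hvar hF2)

end ConditionalExpectation

section Momentum

variable {Ω E : Type*} [MeasurableSpace Ω] {μ : Measure Ω} [NormedAddCommGroup E] [NormedSpace ℝ E]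

theorem integral_norm_smul_add_one_sub_smul_le {β : ℝ} (hβ : β ∈ Set.Icc 0 1) {x y : Ω → E}
    (hx : Integrable x μ) (hy : Integrable y μ) :
    ∫ ω, ‖β • x ω + (1 - β) • y ω‖ ∂μ ≤ β * ∫ ω, ‖x ω‖ ∂μ + (1 - β) * ∫ ω, ‖y ω‖ ∂μ := by
  obtain ⟨hβ₀, hβ₁⟩ := hβ
  rw [← integral_const_mul, ← integral_const_mul,
    ← integral_add (hx.norm.const_mul β) (hy.norm.const_mul (1 - β))]
  refine integral_mono_of_nonneg (ae_of_all _ fun _ => norm_nonneg _)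
    ((hx.norm.const_mul β).add (hy.norm.const_mul (1 - β))) (ae_of_all _ fun ω => ?_)
  calc ‖β • x ω + (1 - β) • y ω‖ ≤ ‖β • x ω‖ + ‖(1 - β) • y ω‖ := norm_add_le _ _
    _ = β * ‖x ω‖ + (1 - β) * ‖y ω‖ := by
        rw [norm_smul_of_nonneg hβ₀, norm_smul_of_nonneg (sub_nonneg.mpr hβ₁)]

theorem integrable_momentum_and_integral_norm_le {β : ℕ → ℝ} {m mp g : ℕ → Ω → E} {S : ℝ}
    (hβ : ∀ k, β k ∈ Set.Icc 0 1) (hmp0 : ∀ ω, mp 0 ω = 0)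
    (hmrec : ∀ k ω, m k ω = β k • mp k ω + (1 - β k) • g k ω)
    (hmpshift : ∀ k ω, mp (k + 1) ω = m k ω) (hg : ∀ k, Integrable (g k) μ) (hS : 0 ≤ S)
    (hgS : ∀ k, ∫ ω, ‖g k ω‖ ∂μ ≤ S) (k : ℕ) :
    Integrable (m k) μ ∧ ∫ ω, ‖m k ω‖ ∂μ ≤ S := by
  have hmp : ∀ k, Integrable (mp k) μ ∧ ∫ ω, ‖mp k ω‖ ∂μ ≤ S := by
    intro k
    induction k with
    | zero => simpa [show mp 0 = 0 from funext hmp0] using hS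
    | succ k ih =>
      obtain ⟨hint, hle⟩ := ih
      have hshift : mp (k + 1) = fun ω => β k • mp k ω + (1 - β k) • g k ω :=
        funext fun ω => (hmpshift k ω).trans (hmrec k ω)
      refine ⟨hshift ▸ (hint.smul (β k)).add ((hg k).smul (1 - β k)), ?_⟩
      rw [hshift]
      calc _ ≤ β k * ∫ ω, ‖mp k ω‖ ∂μ + (1 - β k) * ∫ ω, ‖g k ω‖ ∂μ :=
            integral_norm_smul_add_one_sub_smul_le (hβ k) hint (hg k)
        _ ≤ β k * S + (1 - β k) * S := by
            gcongr
            exacts [(hβ k).1, sub_nonneg.mpr (hβ k).2, hgS k]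
        _ = S := by ring
  simpa only [← funext (hmpshift k)] using hmp (k + 1)

end Momentum

theorem adam_theorem1_constant_lr_general
    {Ω : Type*} [MeasurableSpace Ω] (μ : Measure Ω) [IsProbabilityMeasure μ]
    {d : ℕ} (f : EuclideanSpace ℝ (Fin d) → ℝ)
    (θ m mp v g : ℕ → Ω → EuclideanSpace ℝ (Fin d))
    (β1 β2 : ℕ → ℝ)
    (σ2 b G B M vstar : ℝ)
    (D : EuclideanSpace ℝ (Fin d) → ℝ)
    (hb : 0 < b) (hσ2 : 0 ≤ σ2) (hG : 0 < G) (hB : 0 < B)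
    (hmp0 : ∀ ω, mp 0 ω = 0)
    (hmrec : ∀ k ω, m k ω = β1 k • mp k ω + (1 - β1 k) • g k ω)
    (hmpshift : ∀ k ω, mp (k+1) ω = m k ω)
    (hv0 : ∀ ω (i : Fin d), v 0 ω i = (1 - β2 0) * (g 0 ω i) ^ 2)
    (hθmeas : ∀ k, Measurable (θ k)) (hgmeas : ∀ k, Measurable (g k))
    (hunbiased : ∀ k, μ[g k | MeasurableSpace.comap (θ k) inferInstance]
        =ᵐ[μ] fun ω => gradient f (θ k ω))
    (hvar : ∀ k, ∫ ω, ‖g k ω - gradient f (θ k ω)‖ ^ 2 ∂μ ≤ σ2 / b)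
    (hGbd : ∀ k, ∀ᵐ ω ∂μ, ‖gradient f (θ k ω)‖ ≤ G)
    (hBbd : ∀ k, ∀ᵐ ω ∂μ, ‖g k ω‖ ≤ B)
    (hDpos : ∀ x, 0 < D x)
    (hDbd : ∀ x k, ∀ᵐ ω ∂μ, ‖θ k ω - x‖ ≤ D x)
    (hM : ∀ k, ∀ᵐ ω ∂μ, ∀ i, (g k ω i) ^ 2 ≤ M)
    (hvstar : 0 < vstar)
    (hvstarle : ∀ k, ∀ᵐ ω ∂μ, ∀ i, vstar ≤ v k ω i)
    (αc β1c β2c : ℝ) (hαc : 0 < αc)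
    (hβ1c : β1c ∈ Set.Ioo (0:ℝ) 1) (hβ2c : β2c ∈ Set.Ico (0:ℝ) 1)
    (hβ1const : ∀ k, β1 k = β1c) (hβ2const : ∀ k, β2 k = β2c)
    (θstar : EuclideanSpace ℝ (Fin d)) :
    (∀ k : ℕ,
      ∫ ω, (inner ℝ (m k ω) (θ k ω - θstar) : ℝ) ∂μ ≤
        D θstar * M ^ ((1:ℝ)/4) / (vstar ^ ((1:ℝ)/4) * β1c) * Real.sqrt (σ2 / b + G ^ 2)
        + αc * Real.sqrt (1 - β2c ^ (k+1)) / (2 * Real.sqrt vstar * β1c * (1 - β1c ^ (k+1))) * (σ2 / b + G ^ 2)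
        + (1 - β1c) / β1c * D θstar * G
        + (1 - β1c) * D θstar * (B + Real.sqrt (σ2 / b + G ^ 2))) ∧
    (∀ (x : EuclideanSpace ℝ (Fin d)) (k : ℕ),
      ∫ ω, (inner ℝ (gradient f (θ k ω)) (θ k ω - x) : ℝ) ∂μ ≤
        D x * M ^ ((1:ℝ)/4) / (vstar ^ ((1:ℝ)/4) * β1c) * Real.sqrt (σ2 / b + G ^ 2)
        + αc * Real.sqrt (1 - β2c ^ (k+1)) / (2 * Real.sqrt vstar * β1c * (1 - β1c ^ (k+1))) * (σ2 / b + G ^ 2)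
        + (1 - β1c) / β1c * D x * G
        + (1 / β1c + 2 * (1 - β1c)) * D x * (B + Real.sqrt (σ2 / b + G ^ 2))) := by
  obtain ⟨hβ1₀, hβ1₁⟩ := hβ1c
  set S := √(σ2 / b + G ^ 2)
  have hGS : G ≤ S := le_sqrt_of_sq_le (by linarith [div_nonneg hσ2 hb.le])
  have hg1 k : ∫ ω, ‖g k ω‖ ∂μ ≤ S :=
    integral_norm_le_sqrt_of_condExp_ae_eq (hθmeas k).comap_le (hgmeas k).aestronglyMeasurable
      (hBbd k) (hunbiased k) (hGbd k) (hvar k)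
  have hm1 k := integrable_momentum_and_integral_norm_le
    (fun k => hβ1const k ▸ ⟨hβ1₀.le, hβ1₁.le⟩) hmp0 hmrec hmpshift
    (fun k => .of_bound (hgmeas k).aestronglyMeasurable B (hBbd k)) (sqrt_nonneg _) hg1 k
  -- For `d = 0` nothing forces `M ≥ 0`, and `M ^ (1/4)` is then `exp (log M / 4) * cos (π / 4)`.
  have hM4 : 0 ≤ M ^ ((1:ℝ)/4) := rpow_nonneg_of_abs_le_half (by norm_num [abs_of_pos]) M
  have hβ1' : 0 ≤ 1 - β1c := by linarith
  have hβ1pow k : 0 ≤ 1 - β1c ^ (k + 1) := sub_nonneg.mpr (pow_le_one₀ hβ1₀.le hβ1₁.le)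
  refine ⟨fun k => ?_, fun x k => ?_⟩
  · have hD := hDpos θstar
    have := hβ1pow k
    have hmT1 : D θstar * ∫ ω, ‖m k ω‖ ∂μ
        ≤ D θstar * M ^ ((1:ℝ)/4) / (vstar ^ ((1:ℝ)/4) * β1c) * S := by
      rcases Nat.eq_zero_or_pos d with rfl | hd
      · rw [show ∫ ω, ‖m k ω‖ ∂μ = 0 by simp [Subsingleton.elim (m k _) 0], mul_zero]
        positivity
      have : Nonempty (Fin d) := ⟨⟨0, hd⟩⟩
      have hvM : vstar ≤ M := le_of_ae_le_one_sub_mul_sq (hβ2const 0 ▸ hβ2c.1) (hv0 ·) (hM 0)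
        (hvstarle 0)
      exact mul_le_mul_rpow_div_mul_mul hD.le (hm1 k).2 (sqrt_nonneg _) hvstar hvM (by norm_num)
        hβ1₀ hβ1₁.le
    refine le_add_of_le_of_nonneg (le_add_of_le_of_nonneg (le_add_of_le_of_nonneg ?_ ?_) ?_) ?_
    · exact (integral_inner_le_mul_integral_norm (hm1 k).1.norm (hDbd θstar k)).trans hmT1
    all_goals positivity
  · have hD := hDpos x
    have := hβ1pow k
    have hF : Integrable (fun ω => ‖gradient f (θ k ω)‖) μ :=
      (integrable_condExp.congr (hunbiased k)).norm
    have hF1 : ∫ ω, ‖gradient f (θ k ω)‖ ∂μ ≤ G :=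
      integral_le_of_ae_le_of_nonneg (ae_of_all _ fun _ => norm_nonneg _) (hGbd k)
    have hβ : 1 ≤ 1 / β1c + 2 * (1 - β1c) := by linarith [one_le_one_div hβ1₀ hβ1₁.le]
    refine le_add_of_nonneg_of_le (by positivity) ?_
    calc ∫ ω, inner ℝ (gradient f (θ k ω)) (θ k ω - x) ∂μ
        ≤ D x * ∫ ω, ‖gradient f (θ k ω)‖ ∂μ := integral_inner_le_mul_integral_norm hF (hDbd x k)
      _ ≤ D x * (B + S) := mul_le_mul_of_nonneg_left (by linarith) hD.le
      _ ≤ (1 / β1c + 2 * (1 - β1c)) * D x * (B + S) := by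
          rw [mul_assoc]
          exact le_mul_of_one_le_left (by positivity) hβ

theorem adam_theorem1_constant_lr
    {Ω : Type*} [MeasurableSpace Ω] (μ : Measure Ω) [IsProbabilityMeasure μ]
    {d : ℕ} (f : EuclideanSpace ℝ (Fin d) → ℝ)
    (θ m mp v g dvec : ℕ → Ω → EuclideanSpace ℝ (Fin d))
    (vhat : ℕ → Ω → Fin d → ℝ)
    (α β1 β2 : ℕ → ℝ)
    (σ2 b G B M vstar : ℝ)
    (D : EuclideanSpace ℝ (Fin d) → ℝ)
    (hf : ContDiff ℝ 1 f)
    (hb : 0 < b) (hσ2 : 0 ≤ σ2) (hG : 0 < G) (hB : 0 < B)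
    (hαpos : ∀ k, 0 < α k)
    (hmp0 : ∀ ω, mp 0 ω = 0)
    (hmrec : ∀ k ω, m k ω = β1 k • mp k ω + (1 - β1 k) • g k ω)
    (hmpshift : ∀ k ω, mp (k+1) ω = m k ω)
    (hv0 : ∀ ω (i : Fin d), v 0 ω i = (1 - β2 0) * (g 0 ω i) ^ 2)
    (hvrec : ∀ k ω (i : Fin d), v (k+1) ω i = β2 (k+1) * v k ω i + (1 - β2 (k+1)) * (g (k+1) ω i) ^ 2)
    (hvhat : ∀ k ω (i : Fin d), vhat k ω i = v k ω i / (1 - (β2 k) ^ (k+1)))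
    (hdvec : ∀ k ω (i : Fin d), dvec k ω i = -(m k ω i / (1 - (β1 k) ^ (k+1))) / Real.sqrt (vhat k ω i))
    (hθrec : ∀ k ω, θ (k+1) ω = θ k ω + α k • dvec k ω)
    (hθmeas : ∀ k, Measurable (θ k)) (hgmeas : ∀ k, Measurable (g k))
    (hunbiased : ∀ k, μ[g k | MeasurableSpace.comap (θ k) inferInstance]
        =ᵐ[μ] fun ω => gradient f (θ k ω))
    (hvar : ∀ k, ∫ ω, ‖g k ω - gradient f (θ k ω)‖ ^ 2 ∂μ ≤ σ2 / b)
    (hGbd : ∀ k, ∀ᵐ ω ∂μ, ‖gradient f (θ k ω)‖ ≤ G)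
    (hBbd : ∀ k, ∀ᵐ ω ∂μ, ‖g k ω‖ ≤ B)
    (hDpos : ∀ x, 0 < D x)
    (hDbd : ∀ x k, ∀ᵐ ω ∂μ, ‖θ k ω - x‖ ≤ D x)
    (hM : ∀ k, ∀ᵐ ω ∂μ, ∀ i, (g k ω i) ^ 2 ≤ M)
    (hvstar : 0 < vstar)
    (hvstarle : ∀ k, ∀ᵐ ω ∂μ, ∀ i, vstar ≤ v k ω i)
    (αc β1c β2c : ℝ) (hαc : 0 < αc)
    (hβ1c : β1c ∈ Set.Ioo (0:ℝ) 1) (hβ2c : β2c ∈ Set.Ico (0:ℝ) 1)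
    (hαconst : ∀ k, α k = αc) (hβ1const : ∀ k, β1 k = β1c) (hβ2const : ∀ k, β2 k = β2c)
    (θstar : EuclideanSpace ℝ (Fin d)) (hstat : gradient f θstar = 0) :
    (∀ k : ℕ,
      ∫ ω, (inner ℝ (m k ω) (θ k ω - θstar) : ℝ) ∂μ ≤
        D θstar * M ^ ((1:ℝ)/4) / (vstar ^ ((1:ℝ)/4) * β1c) * Real.sqrt (σ2 / b + G ^ 2)
        + αc * Real.sqrt (1 - β2c ^ (k+1)) / (2 * Real.sqrt vstar * β1c * (1 - β1c ^ (k+1))) * (σ2 / b + G ^ 2)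
        + (1 - β1c) / β1c * D θstar * G
        + (1 - β1c) * D θstar * (B + Real.sqrt (σ2 / b + G ^ 2))) ∧
    (∀ (x : EuclideanSpace ℝ (Fin d)) (k : ℕ),
      ∫ ω, (inner ℝ (gradient f (θ k ω)) (θ k ω - x) : ℝ) ∂μ ≤
        D x * M ^ ((1:ℝ)/4) / (vstar ^ ((1:ℝ)/4) * β1c) * Real.sqrt (σ2 / b + G ^ 2)
        + αc * Real.sqrt (1 - β2c ^ (k+1)) / (2 * Real.sqrt vstar * β1c * (1 - β1c ^ (k+1))) * (σ2 / b + G ^ 2)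
        + (1 - β1c) / β1c * D x * G
        + (1 / β1c + 2 * (1 - β1c)) * D x * (B + Real.sqrt (σ2 / b + G ^ 2))) :=
  adam_theorem1_constant_lr_general μ f θ m mp v g β1 β2 σ2 b G B M vstar D hb hσ2 hG hB hmp0 hmrec
    hmpshift hv0 hθmeas hgmeas hunbiased hvar hGbd hBbd hDpos hDbd hM hvstar hvstarle αc β1c β2c hαc
    hβ1c hβ2c hβ1const hβ2const θstar
end

section
/- (Lemma A.6) For Adam, under assumptions (S1)-(S3) and (A1)-(A2), suppose additionally that β_{1k} = β₁ ∈ (0,1) for all k, (α_k)_{k∈ℕ} is monotone decreasing, and Condition (M) holds. Then for all K ≥ 1 and all θ ∈ ℝ^d: (1/K)∑_{k=1}^K E[(θ_k − θ)ᵀ m_{k−1}] ≤ d D̃(θ)√M β̃_{1K}/(2β₁ α_K √(β̃_{2K}) K) + ((σ²/b + G²)/(2√(v_*) β₁ (1−β₁) K)) ∑_{k=1}^K α_k √(β̃_{2k}) + D(θ) G (1−β₁)/β₁. -/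
/-!
Write the Adam step coordinatewise as `θ_{k+1,i} = θ_{k,i} - c_k m_{k,i} / s_{k,i}` with
`s_k = √v̂_k` and `c_k = α_k / β̃_{1k}`. Then
`(θ_{k,i} - x_i) m_{k,i} = s_{k,i} / (2 c_k) ((θ_{k,i} - x_i)² - (θ_{k+1,i} - x_i)²)
  + c_k m_{k,i}² / (2 s_{k,i})`,
which splits `⟪θ_k - x, m_k⟫` into a telescoping part and a quadratic part. Condition (M) and the
decrease of `α_k` make the weights `s_{k,i} / (2 c_k)` nondecreasing in `k`, so Abel summation
bounds the telescoping sum by `d D̃ max_i s_{K,i} / (2 c_K)`, with `s_{K,i} ≤ √M / √β̃_{2K}`. Since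
`s_{k,i} ≥ √v_* / √β̃_{2k}`, the quadratic part is a multiple of `‖m_k‖²`, and `E‖m_k‖² ≤ σ²/b + G²`
because `‖·‖²` is convex and, by unbiasedness, `E‖g_k‖² = E‖g_k - ∇f(θ_k)‖² + E‖∇f(θ_k)‖²`.
Finally `m_{k-1} = (m_k - (1 - β₁) g_k) / β₁`, and unbiasedness again gives
`E⟪θ_k - x, g_k⟫ = E⟪θ_k - x, ∇f(θ_k)⟫ ≥ -D(x) G`.
-/

open MeasureTheory Filter Real
open scoped InnerProductSpace

lemma sum_Icc_mul_sub_succ_le {u w : ℕ → ℝ} {C : ℝ} (hu : Monotone u) (hu0 : ∀ k, 0 ≤ u k)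
    (hw0 : ∀ k, 0 ≤ w k) (hwC : ∀ k, w k ≤ C) (K : ℕ) :
    ∑ k ∈ Finset.Icc 1 K, u k * (w k - w (k + 1)) ≤ u K * C := by
  suffices h : ∑ k ∈ Finset.Icc 1 K, u k * (w k - w (k + 1)) ≤ u K * (C - w (K + 1)) by
    nlinarith [hu0 K, hw0 (K + 1)]
  induction K with
  | zero => simpa using mul_nonneg (hu0 0) (sub_nonneg.2 (hwC 1))
  | succ K ih =>
    rw [Finset.sum_Icc_succ_top (by omega)]
    nlinarith [hu (Nat.le_succ K), hwC (K + 1)]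

lemma sub_mul_eq_of_step {s c t y m : ℝ} (hs : s ≠ 0) (hc : c ≠ 0) :
    (t - y) * m
      = s / (2 * c) * ((t - y) ^ 2 - (t - c * (m / s) - y) ^ 2) + c / 2 * (m ^ 2 / s) := by
  field_simp
  ring

lemma le_of_le_convex_comb_succ {a c β : ℕ → ℝ} {C : ℝ} (hβ : ∀ k, β k ∈ Set.Icc (0 : ℝ) 1)
    (ha0 : a 0 ≤ C) (hcC : ∀ k, c k ≤ C) (ha : ∀ k, a (k + 1) ≤ β k * a k + (1 - β k) * c k) :
    ∀ k, a k ≤ C := by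
  intro k
  induction k with
  | zero => exact ha0
  | succ k ih => nlinarith [ha k, (hβ k).1, (hβ k).2, hcC k]

lemma inner_sub_eq_of_diag_step {d : ℕ} {θ θ' m x : EuclideanSpace ℝ (Fin d)} {s : Fin d → ℝ}
    {c : ℝ} (hs : ∀ i, s i ≠ 0) (hc : c ≠ 0) (hstep : ∀ i, θ' i = θ i - c * (m i / s i)) :
    ⟪θ - x, m⟫_ℝ = ∑ i, s i / (2 * c) * ((θ i - x i) ^ 2 - (θ' i - x i) ^ 2)
      + c / 2 * ∑ i, m i ^ 2 / s i := by
  simp only [PiLp.inner_apply, RCLike.inner_apply, conj_trivial, PiLp.sub_apply, hstep,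
    Finset.mul_sum, ← Finset.sum_add_distrib]
  exact Finset.sum_congr rfl fun i _ => by rw [mul_comm, sub_mul_eq_of_step (hs i) hc]

theorem sum_inner_sub_le_of_diag_step {d : ℕ} {θ m : ℕ → EuclideanSpace ℝ (Fin d)}
    {s : ℕ → Fin d → ℝ} {c σ : ℕ → ℝ} {x : EuclideanSpace ℝ (Fin d)} {R S : ℝ} {K : ℕ}
    (hc : ∀ k, 0 < c k) (hc_anti : Antitone c) (hσ : ∀ k, 0 < σ k) (hσs : ∀ k i, σ k ≤ s k i)
    (hs_mono : ∀ i, Monotone (s · i)) (hsS : ∀ i, s K i ≤ S)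
    (hstep : ∀ k i, θ (k + 1) i = θ k i - c k * (m k i / s k i))
    (hR : ∀ k i, (θ k i - x i) ^ 2 ≤ R) :
    ∑ k ∈ Finset.Icc 1 K, ⟪θ k - x, m k⟫_ℝ
      ≤ d * R * S / (2 * c K) + ∑ k ∈ Finset.Icc 1 K, c k / (2 * σ k) * ‖m k‖ ^ 2 := by
  have hs : ∀ k i, 0 < s k i := fun k i => (hσ k).trans_le (hσs k i)
  have htelescope : ∑ k ∈ Finset.Icc 1 K, ∑ i, s k i / (2 * c k) *
      ((θ k i - x i) ^ 2 - (θ (k + 1) i - x i) ^ 2) ≤ d * R * S / (2 * c K) := by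
    rw [Finset.sum_comm]
    calc _ ≤ ∑ i : Fin d, s K i / (2 * c K) * R := by
          refine Finset.sum_le_sum fun i _ => sum_Icc_mul_sub_succ_le ?_
            (fun k => div_nonneg (hs k i).le (by linarith [hc k])) (fun k => sq_nonneg _)
            (fun k => hR k i) K
          exact fun j k hjk => div_le_div₀ (hs k i).le (hs_mono i hjk) (by linarith [hc k])
            (by linarith [hc_anti hjk])
      _ ≤ ∑ i : Fin d, S / (2 * c K) * R := by
          gcongr with i
          · exact (sq_nonneg _).trans (hR 0 i)
          · linarith [hc K]
          · exact hsS i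
      _ = d * R * S / (2 * c K) := by
          rw [Finset.sum_const, Finset.card_univ, Fintype.card_fin, nsmul_eq_mul]
          ring
  have hquad : ∀ k, c k / 2 * ∑ i, m k i ^ 2 / s k i ≤ c k / (2 * σ k) * ‖m k‖ ^ 2 := by
    intro k
    rw [EuclideanSpace.norm_sq_eq, Finset.mul_sum, Finset.mul_sum]
    refine Finset.sum_le_sum fun i _ => ?_
    rw [Real.norm_eq_abs, sq_abs]
    calc c k / 2 * (m k i ^ 2 / s k i) = c k / (2 * s k i) * m k i ^ 2 := by ring
      _ ≤ c k / (2 * σ k) * m k i ^ 2 := by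
        have := hc k; have := hσ k
        gcongr
        exact hσs k i
  calc ∑ k ∈ Finset.Icc 1 K, ⟪θ k - x, m k⟫_ℝ
      = ∑ k ∈ Finset.Icc 1 K, ∑ i, s k i / (2 * c k) *
          ((θ k i - x i) ^ 2 - (θ (k + 1) i - x i) ^ 2)
        + ∑ k ∈ Finset.Icc 1 K, c k / 2 * ∑ i, m k i ^ 2 / s k i := by
        rw [← Finset.sum_add_distrib]
        exact Finset.sum_congr rfl fun k _ =>
          inner_sub_eq_of_diag_step (fun i => (hs k i).ne') (hc k).ne' (hstep k)
    _ ≤ _ := add_le_add htelescope (Finset.sum_le_sum fun k _ => hquad k)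

lemma ema_sq_le {v g β2 : ℕ → ℝ} {M : ℝ} (hβ2 : ∀ k, β2 k ∈ Set.Icc (0 : ℝ) 1)
    (hv0 : v 0 = (1 - β2 0) * g 0 ^ 2)
    (hvrec : ∀ k, v (k + 1) = β2 (k + 1) * v k + (1 - β2 (k + 1)) * g (k + 1) ^ 2)
    (hM : ∀ k, g k ^ 2 ≤ M) : ∀ k, v k ≤ M :=
  le_of_le_convex_comb_succ (c := fun k => g (k + 1) ^ 2) (β := fun k => β2 (k + 1))
    (fun k => hβ2 (k + 1)) (by rw [hv0]; nlinarith [(hβ2 0).1, hM 0, sq_nonneg (g 0)])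
    (fun k => hM (k + 1)) (fun k => (hvrec k).le)

theorem adam_sum_inner_momentum_le {d : ℕ} {θ m g : ℕ → EuclideanSpace ℝ (Fin d)}
    {v vhat : ℕ → Fin d → ℝ} {α β2 : ℕ → ℝ} {β M vstar R : ℝ} {x : EuclideanSpace ℝ (Fin d)}
    (hα : ∀ k, 0 < α k) (hα_anti : ∀ k, α (k + 1) ≤ α k) (hβ : β ∈ Set.Ioo (0 : ℝ) 1)
    (hβ2 : ∀ k, β2 k ∈ Set.Ico (0 : ℝ) 1)
    (hv0 : ∀ i, v 0 i = (1 - β2 0) * g 0 i ^ 2)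
    (hvrec : ∀ k i, v (k + 1) i = β2 (k + 1) * v k i + (1 - β2 (k + 1)) * g (k + 1) i ^ 2)
    (hM : ∀ k i, g k i ^ 2 ≤ M) (hvstar : 0 < vstar) (hv_lb : ∀ k i, vstar ≤ v k i)
    (hvhat : ∀ k i, vhat k i = v k i / (1 - β2 k ^ (k + 1)))
    (hvhat_mono : ∀ k i, vhat k i ≤ vhat (k + 1) i)
    (hstep : ∀ k i, θ (k + 1) i = θ k i + α k * (-(m k i / (1 - β ^ (k + 1))) / √(vhat k i)))
    (hR : ∀ k i, (θ k i - x i) ^ 2 ≤ R) (K : ℕ) :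
    ∑ k ∈ Finset.Icc 1 K, ⟪θ k - x, m k⟫_ℝ
      ≤ d * R * √M * (1 - β ^ (K + 1)) / (2 * α K * √(1 - β2 K ^ (K + 1)))
        + ∑ k ∈ Finset.Icc 1 K,
            α k * √(1 - β2 k ^ (k + 1)) / (2 * √vstar * (1 - β)) * ‖m k‖ ^ 2 := by
  obtain ⟨hβ0, hβ1⟩ := hβ
  have hb1 : ∀ k, 1 - β ≤ 1 - β ^ (k + 1) := fun k => by
    linarith [pow_le_of_le_one hβ0.le hβ1.le (by omega : k + 1 ≠ 0)]
  have hb1_mono : ∀ k, 1 - β ^ (k + 1) ≤ 1 - β ^ (k + 1 + 1) := fun k => by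
    linarith [pow_le_pow_of_le_one hβ0.le hβ1.le (by omega : k + 1 ≤ k + 1 + 1)]
  have hb2 : ∀ k, 0 < √(1 - β2 k ^ (k + 1)) := fun k =>
    sqrt_pos.2 (sub_pos.2 (pow_lt_one₀ (hβ2 k).1 (hβ2 k).2 k.succ_ne_zero))
  have hvM : ∀ i k, v k i ≤ M := fun i =>
    ema_sq_le (fun k => Set.Ico_subset_Icc_self (hβ2 k)) (hv0 i) (hvrec · i) (hM · i)
  have hvhat_lb : ∀ k i, √vstar / √(1 - β2 k ^ (k + 1)) ≤ √(vhat k i) := fun k i => by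
    rw [← sqrt_div' _ (sqrt_pos.1 (hb2 k)).le, hvhat]
    exact sqrt_le_sqrt (div_le_div_of_nonneg_right (hv_lb k i) (sqrt_pos.1 (hb2 k)).le)
  have hvhat_ub : ∀ k i, √(vhat k i) ≤ √M / √(1 - β2 k ^ (k + 1)) := fun k i => by
    rw [← sqrt_div' _ (sqrt_pos.1 (hb2 k)).le, hvhat]
    exact sqrt_le_sqrt (div_le_div_of_nonneg_right (hvM i k) (sqrt_pos.1 (hb2 k)).le)
  have key := sum_inner_sub_le_of_diag_step (θ := θ) (m := m) (s := fun k i => √(vhat k i))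
    (c := fun k => α k / (1 - β ^ (k + 1))) (σ := fun k => √vstar / √(1 - β2 k ^ (k + 1)))
    (x := x) (R := R) (S := √M / √(1 - β2 K ^ (K + 1))) (K := K)
    (fun k => div_pos (hα k) (by linarith [hb1 k]))
    (antitone_nat_of_succ_le fun k =>
      div_le_div₀ (hα k).le (hα_anti k) (by linarith [hb1 k]) (hb1_mono k))
    (fun k => div_pos (sqrt_pos.2 hvstar) (hb2 k)) hvhat_lb
    (fun i => monotone_nat_of_le_succ fun k => sqrt_le_sqrt (hvhat_mono k i))
    (hvhat_ub K) (fun k i => by rw [hstep]; ring) hR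
  refine key.trans (add_le_add (le_of_eq ?_) (Finset.sum_le_sum fun k _ => ?_))
  · have := hb2 K
    have := hα K
    have : 0 < 1 - β ^ (K + 1) := by linarith [hb1 K]
    field_simp
  · have := hb2 k
    have := sqrt_pos.2 hvstar
    have := hα k
    have : 0 < 1 - β ^ (k + 1) := by linarith [hb1 k]
    calc α k / (1 - β ^ (k + 1)) / (2 * (√vstar / √(1 - β2 k ^ (k + 1)))) * ‖m k‖ ^ 2
        = α k * √(1 - β2 k ^ (k + 1)) / (2 * √vstar * (1 - β ^ (k + 1))) * ‖m k‖ ^ 2 := by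
          field_simp
      _ ≤ _ := by
          gcongr
          exact pow_le_of_le_one hβ0.le hβ1.le (by omega)

section Momentum

variable {E : Type*} [SeminormedAddCommGroup E] [NormedSpace ℝ E] {β : ℝ}

lemma norm_smul_add_one_sub_smul_le (hβ : β ∈ Set.Icc (0 : ℝ) 1) (a b : E) :
    ‖β • a + (1 - β) • b‖ ≤ β * ‖a‖ + (1 - β) * ‖b‖ :=
  (convexOn_norm convex_univ).2 trivial trivial hβ.1 (sub_nonneg.2 hβ.2) (by ring)

lemma norm_smul_add_one_sub_smul_sq_le (hβ : β ∈ Set.Icc (0 : ℝ) 1) (a b : E) :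
    ‖β • a + (1 - β) • b‖ ^ 2 ≤ β * ‖a‖ ^ 2 + (1 - β) * ‖b‖ ^ 2 :=
  ((convexOn_norm convex_univ).pow (fun _ _ => norm_nonneg _) 2).2 trivial trivial hβ.1
    (sub_nonneg.2 hβ.2) (by ring)

lemma norm_momentum_le {m mp g : ℕ → E} {B : ℝ} (hβ : β ∈ Set.Icc (0 : ℝ) 1) (hB : 0 ≤ B)
    (hmp0 : mp 0 = 0) (hm : ∀ k, m k = β • mp k + (1 - β) • g k)
    (hshift : ∀ k, mp (k + 1) = m k) (hg : ∀ k, ‖g k‖ ≤ B) : ∀ k, ‖mp k‖ ≤ B :=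
  le_of_le_convex_comb_succ (a := fun k => ‖mp k‖) (β := fun _ => β) (fun _ => hβ)
    (by simpa [hmp0] using hB) hg
    (fun k => by simpa only [hshift, hm] using norm_smul_add_one_sub_smul_le hβ (mp k) (g k))

variable {Ω : Type*} {mΩ : MeasurableSpace Ω} {μ : Measure Ω}
  {m mp g : ℕ → Ω → E}

lemma measurable_momentum [MeasurableSpace E] [BorelSpace E] [SecondCountableTopology E]
    (hmp0 : ∀ ω, mp 0 ω = 0) (hm : ∀ k ω, m k ω = β • mp k ω + (1 - β) • g k ω)
    (hshift : ∀ k ω, mp (k + 1) ω = m k ω) (hg : ∀ k, Measurable (g k)) :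
    ∀ k, Measurable (m k) := by
  have hmp : ∀ k, Measurable (mp k) := by
    intro k
    induction k with
    | zero => exact (funext hmp0 : mp 0 = fun _ => 0) ▸ measurable_const
    | succ k ih =>
      have h : mp (k + 1) = fun ω => β • mp k ω + (1 - β) • g k ω :=
        funext fun ω => by rw [hshift, hm]
      exact h ▸ (ih.const_smul β).add ((hg k).const_smul (1 - β))
  exact fun k => funext (hshift k) ▸ hmp (k + 1)

lemma ae_norm_momentum_le [NeZero μ] (hβ : β ∈ Set.Icc (0 : ℝ) 1) (hmp0 : ∀ ω, mp 0 ω = 0)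
    (hm : ∀ k ω, m k ω = β • mp k ω + (1 - β) • g k ω) (hshift : ∀ k ω, mp (k + 1) ω = m k ω)
    {B : ℝ} (hg : ∀ k, ∀ᵐ ω ∂μ, ‖g k ω‖ ≤ B) (k : ℕ) : ∀ᵐ ω ∂μ, ‖m k ω‖ ≤ B := by
  have hB : 0 ≤ B := let ⟨_, hω⟩ := (hg 0).exists; (norm_nonneg _).trans hω
  filter_upwards [ae_all_iff.2 hg] with ω hω
  simpa only [hshift] using
    norm_momentum_le hβ hB (hmp0 ω) (hm · ω) (hshift · ω) hω (k + 1)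

lemma integral_norm_sq_momentum_le (hβ : β ∈ Set.Icc (0 : ℝ) 1)
    (hmp0 : ∀ ω, mp 0 ω = 0) (hm : ∀ k ω, m k ω = β • mp k ω + (1 - β) • g k ω)
    (hshift : ∀ k ω, mp (k + 1) ω = m k ω)
    (hm_int : ∀ k, Integrable (fun ω => ‖m k ω‖ ^ 2) μ)
    (hg_int : ∀ k, Integrable (fun ω => ‖g k ω‖ ^ 2) μ) {V : ℝ}
    (hV : ∀ k, ∫ ω, ‖g k ω‖ ^ 2 ∂μ ≤ V) (k : ℕ) : ∫ ω, ‖m k ω‖ ^ 2 ∂μ ≤ V := by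
  have hmp_int : ∀ k, Integrable (fun ω => ‖mp k ω‖ ^ 2) μ
    | 0 => by simp [hmp0]
    | k + 1 => by simpa only [hshift] using hm_int k
  have hmp : ∀ k, ∫ ω, ‖mp k ω‖ ^ 2 ∂μ ≤ V := by
    refine le_of_le_convex_comb_succ (a := fun k => ∫ ω, ‖mp k ω‖ ^ 2 ∂μ) (β := fun _ => β)
      (fun _ => hβ) ?_ hV fun k => ?_
    · simpa [hmp0] using (integral_nonneg fun ω => sq_nonneg ‖g 0 ω‖).trans (hV 0)
    · calc ∫ ω, ‖mp (k + 1) ω‖ ^ 2 ∂μ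
          ≤ ∫ ω, (β * ‖mp k ω‖ ^ 2 + (1 - β) * ‖g k ω‖ ^ 2) ∂μ := by
            refine integral_mono (hmp_int (k + 1)) (((hmp_int k).const_mul β).add
              ((hg_int k).const_mul (1 - β))) fun ω => ?_
            simpa only [hshift, hm] using norm_smul_add_one_sub_smul_sq_le hβ (mp k ω) (g k ω)
        _ = β * ∫ ω, ‖mp k ω‖ ^ 2 ∂μ + (1 - β) * ∫ ω, ‖g k ω‖ ^ 2 ∂μ := by
            rw [integral_add ((hmp_int k).const_mul β) ((hg_int k).const_mul (1 - β)),
              integral_const_mul, integral_const_mul]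
  simpa only [hshift] using hmp (k + 1)

end Momentum

section Expectation

variable {Ω E : Type*} {mΩ : MeasurableSpace Ω} {μ : Measure Ω}
  [NormedAddCommGroup E] [InnerProductSpace ℝ E]

lemma integral_inner_condExp [CompleteSpace E] {m : MeasurableSpace Ω} (hm : m ≤ mΩ)
    [SigmaFinite (μ.trim hm)] {Y g : Ω → E} (hY : StronglyMeasurable[m] Y)
    (hYg : Integrable (fun ω => ⟪Y ω, g ω⟫_ℝ) μ) (hg : Integrable g μ) :
    ∫ ω, ⟪Y ω, g ω⟫_ℝ ∂μ = ∫ ω, ⟪Y ω, (μ[g|m]) ω⟫_ℝ ∂μ := by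
  rw [← integral_condExp hm]
  exact integral_congr_ae (condExp_bilin_of_stronglyMeasurable_left (innerSL ℝ) hY hYg hg)

variable [IsProbabilityMeasure μ]

lemma integrable_inner_of_ae_norm_le {a c : Ω → E} (ha : AEStronglyMeasurable a μ)
    (hc : AEStronglyMeasurable c μ) {A C : ℝ} (hA : ∀ᵐ ω ∂μ, ‖a ω‖ ≤ A)
    (hC : ∀ᵐ ω ∂μ, ‖c ω‖ ≤ C) : Integrable (fun ω => ⟪a ω, c ω⟫_ℝ) μ := by
  refine Integrable.of_bound (ha.inner hc) (A * C) ?_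
  filter_upwards [hA, hC] with ω h1 h2
  exact (abs_real_inner_le_norm _ _).trans
    (mul_le_mul h1 h2 (norm_nonneg _) ((norm_nonneg _).trans h1))

lemma integrable_norm_sq_of_ae_norm_le {a : Ω → E} (ha : AEStronglyMeasurable a μ) {A : ℝ}
    (hA : ∀ᵐ ω ∂μ, ‖a ω‖ ≤ A) : Integrable (fun ω => ‖a ω‖ ^ 2) μ := by
  simpa only [real_inner_self_eq_norm_sq] using integrable_inner_of_ae_norm_le ha ha hA hA

lemma sum_integral_le_of_ae_sum_le {ι : Type*} {s : Finset ι} {Z Y : ι → Ω → ℝ} {T : ℝ}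
    (hZ : ∀ k, Integrable (Z k) μ) (hY : ∀ k, Integrable (Y k) μ)
    (h : ∀ᵐ ω ∂μ, ∑ k ∈ s, Z k ω ≤ T + ∑ k ∈ s, Y k ω) :
    ∑ k ∈ s, ∫ ω, Z k ω ∂μ ≤ T + ∑ k ∈ s, ∫ ω, Y k ω ∂μ := by
  rw [← integral_finsetSum s fun k _ => hZ k, ← integral_finsetSum s fun k _ => hY k]
  calc ∫ ω, ∑ k ∈ s, Z k ω ∂μ ≤ ∫ ω, (T + ∑ k ∈ s, Y k ω) ∂μ :=
        integral_mono_ae (integrable_finsetSum s fun k _ => hZ k)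
          ((integrable_const T).add (integrable_finsetSum s fun k _ => hY k)) h
    _ = T + ∫ ω, ∑ k ∈ s, Y k ω ∂μ := by
        rw [integral_add (integrable_const T) (integrable_finsetSum s fun k _ => hY k)]
        simp

lemma sum_integral_inner_prev_momentum_le {ι : Type*} {s : Finset ι} {u m mp g : ι → Ω → E}
    {a : ι → ℝ} {β T V C : ℝ} (hβ : β ∈ Set.Ioo (0 : ℝ) 1) (ha : ∀ k, 0 ≤ a k)
    (hm : ∀ k ω, m k ω = β • mp k ω + (1 - β) • g k ω)
    (hum : ∀ k, Integrable (fun ω => ⟪u k ω, m k ω⟫_ℝ) μ)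
    (hug : ∀ k, Integrable (fun ω => ⟪u k ω, g k ω⟫_ℝ) μ)
    (hm_int : ∀ k, Integrable (fun ω => ‖m k ω‖ ^ 2) μ)
    (hV : ∀ k, ∫ ω, ‖m k ω‖ ^ 2 ∂μ ≤ V) (hC : ∀ k, -C ≤ ∫ ω, ⟪u k ω, g k ω⟫_ℝ ∂μ)
    (h : ∀ᵐ ω ∂μ, ∑ k ∈ s, ⟪u k ω, m k ω⟫_ℝ ≤ T + ∑ k ∈ s, a k * ‖m k ω‖ ^ 2) :
    ∑ k ∈ s, ∫ ω, ⟪u k ω, mp k ω⟫_ℝ ∂μ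
      ≤ (T + V * ∑ k ∈ s, a k) / β + s.card * ((1 - β) / β * C) := by
  obtain ⟨hβ0, hβ1⟩ := hβ
  have hmp : ∀ k, ∫ ω, ⟪u k ω, mp k ω⟫_ℝ ∂μ
      = (∫ ω, ⟪u k ω, m k ω⟫_ℝ ∂μ - (1 - β) * ∫ ω, ⟪u k ω, g k ω⟫_ℝ ∂μ) / β := fun k => by
    rw [← integral_const_mul, ← integral_sub (hum k) ((hug k).const_mul _), ← integral_div]
    refine integral_congr_ae (ae_of_all _ fun ω => ?_)
    simp only [hm, inner_add_right, real_inner_smul_right]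
    field_simp
    ring
  have hsum_m : ∑ k ∈ s, ∫ ω, ⟪u k ω, m k ω⟫_ℝ ∂μ ≤ T + V * ∑ k ∈ s, a k := by
    refine (sum_integral_le_of_ae_sum_le hum (fun k => (hm_int k).const_mul (a k)) h).trans ?_
    rw [Finset.mul_sum]
    gcongr with k
    rw [integral_const_mul, mul_comm V]
    exact mul_le_mul_of_nonneg_left (hV k) (ha k)
  have hsum_g : -(s.card * C) ≤ ∑ k ∈ s, ∫ ω, ⟪u k ω, g k ω⟫_ℝ ∂μ := by
    simpa using Finset.sum_le_sum fun k (_ : k ∈ s) => hC k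
  rw [Finset.sum_congr rfl fun k _ => hmp k, ← Finset.sum_div, Finset.sum_sub_distrib,
    ← Finset.mul_sum, show (s.card : ℝ) * ((1 - β) / β * C) = (1 - β) * (s.card * C) / β by ring,
    ← add_div]
  gcongr
  nlinarith

variable [CompleteSpace E] [MeasurableSpace E] [BorelSpace E] [SecondCountableTopology E]
  {X g : Ω → E} {F ψ : E → E} {A B G : ℝ}

lemma integral_inner_comp_eq_of_condExp_comap (hX : Measurable X) (hg : AEStronglyMeasurable g μ)
    (hψ : Measurable ψ) (hψA : ∀ᵐ ω ∂μ, ‖ψ (X ω)‖ ≤ A) (hgB : ∀ᵐ ω ∂μ, ‖g ω‖ ≤ B)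
    (hunb : μ[g | MeasurableSpace.comap X inferInstance] =ᵐ[μ] fun ω => F (X ω)) :
    ∫ ω, ⟪ψ (X ω), g ω⟫_ℝ ∂μ = ∫ ω, ⟪ψ (X ω), F (X ω)⟫_ℝ ∂μ := by
  rw [integral_inner_condExp (Y := fun ω => ψ (X ω)) hX.comap_le
    (hψ.comp (comap_measurable X)).stronglyMeasurable
    (integrable_inner_of_ae_norm_le (hψ.comp hX).aestronglyMeasurable hg hψA hgB)
    (Integrable.of_bound hg B hgB)]
  exact integral_congr_ae (hunb.mono fun ω h => congrArg (⟪ψ (X ω), ·⟫_ℝ) h)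

lemma integral_norm_sq_le_of_condExp_comap (hX : Measurable X) (hg : AEStronglyMeasurable g μ)
    (hF : Measurable F) (hgB : ∀ᵐ ω ∂μ, ‖g ω‖ ≤ B) (hFG : ∀ᵐ ω ∂μ, ‖F (X ω)‖ ≤ G)
    (hunb : μ[g | MeasurableSpace.comap X inferInstance] =ᵐ[μ] fun ω => F (X ω)) {s : ℝ}
    (hvar : ∫ ω, ‖g ω - F (X ω)‖ ^ 2 ∂μ ≤ s) :
    ∫ ω, ‖g ω‖ ^ 2 ∂μ ≤ s + G ^ 2 := by
  have hFX : AEStronglyMeasurable (fun ω => F (X ω)) μ := (hF.comp hX).aestronglyMeasurable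
  have hdiff := integrable_norm_sq_of_ae_norm_le (a := fun ω => g ω - F (X ω)) (hg.sub hFX)
    (A := B + G)
    (by filter_upwards [hgB, hFG] with ω h1 h2 using (norm_sub_le _ _).trans (by linarith))
  have hcross := integrable_inner_of_ae_norm_le hFX hg hFG hgB
  have hsq := integrable_norm_sq_of_ae_norm_le hFX hFG
  have hcross_eq : ∫ ω, ⟪F (X ω), g ω⟫_ℝ ∂μ = ∫ ω, ‖F (X ω)‖ ^ 2 ∂μ := by
    simp_rw [integral_inner_comp_eq_of_condExp_comap hX hg hF hFG hgB hunb,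
      real_inner_self_eq_norm_sq]
  have hsq_le : ∫ ω, ‖F (X ω)‖ ^ 2 ∂μ ≤ G ^ 2 := by
    refine (integral_mono_ae hsq (integrable_const (G ^ 2)) ?_).trans (by simp)
    filter_upwards [hFG] with ω h using pow_le_pow_left₀ (norm_nonneg _) h 2
  calc ∫ ω, ‖g ω‖ ^ 2 ∂μ
      = ∫ ω, (‖g ω - F (X ω)‖ ^ 2 + 2 * ⟪F (X ω), g ω⟫_ℝ - ‖F (X ω)‖ ^ 2) ∂μ := by
        refine integral_congr_ae (ae_of_all _ fun ω => ?_)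
        dsimp only
        rw [norm_sub_sq_real, real_inner_comm]
        ring
    _ = ∫ ω, ‖g ω - F (X ω)‖ ^ 2 ∂μ + ∫ ω, ‖F (X ω)‖ ^ 2 ∂μ := by
        have hsum : Integrable (fun ω => ‖g ω - F (X ω)‖ ^ 2 + 2 * ⟪F (X ω), g ω⟫_ℝ) μ :=
          hdiff.add (hcross.const_mul 2)
        rw [integral_sub hsum hsq, integral_add hdiff (hcross.const_mul 2), integral_const_mul,
          hcross_eq]
        ring
    _ ≤ s + G ^ 2 := add_le_add hvar hsq_le

lemma neg_mul_le_integral_inner_of_condExp_comap (hX : Measurable X)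
    (hg : AEStronglyMeasurable g μ) (hF : Measurable F) (hψ : Measurable ψ)
    (hψA : ∀ᵐ ω ∂μ, ‖ψ (X ω)‖ ≤ A) (hgB : ∀ᵐ ω ∂μ, ‖g ω‖ ≤ B)
    (hFG : ∀ᵐ ω ∂μ, ‖F (X ω)‖ ≤ G)
    (hunb : μ[g | MeasurableSpace.comap X inferInstance] =ᵐ[μ] fun ω => F (X ω)) :
    -(A * G) ≤ ∫ ω, ⟪ψ (X ω), g ω⟫_ℝ ∂μ := by
  rw [integral_inner_comp_eq_of_condExp_comap hX hg hψ hψA hgB hunb]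
  refine (by simp : -(A * G) = ∫ _, -(A * G) ∂μ).trans_le (integral_mono_ae (integrable_const _)
    (integrable_inner_of_ae_norm_le (hψ.comp hX).aestronglyMeasurable
      (hF.comp hX).aestronglyMeasurable hψA hFG) ?_)
  filter_upwards [hψA, hFG] with ω h1 h2
  exact neg_le_of_abs_le ((abs_real_inner_le_norm _ _).trans
    (mul_le_mul h1 h2 (norm_nonneg _) ((norm_nonneg _).trans h1)))

end Expectation

theorem adam_lemmaA6_general
    {Ω : Type*} [MeasurableSpace Ω] (μ : Measure Ω) [IsProbabilityMeasure μ]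
    {d : ℕ} (f : EuclideanSpace ℝ (Fin d) → ℝ)
    (θ m mp v g dvec : ℕ → Ω → EuclideanSpace ℝ (Fin d))
    (vhat : ℕ → Ω → Fin d → ℝ)
    (α β1 β2 : ℕ → ℝ)
    (σ2 b G B M vstar : ℝ)
    (D : EuclideanSpace ℝ (Fin d) → ℝ)
    (hαpos : ∀ k, 0 < α k)
    (hmp0 : ∀ ω, mp 0 ω = 0)
    (hmrec : ∀ k ω, m k ω = β1 k • mp k ω + (1 - β1 k) • g k ω)
    (hmpshift : ∀ k ω, mp (k+1) ω = m k ω)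
    (hv0 : ∀ ω (i : Fin d), v 0 ω i = (1 - β2 0) * (g 0 ω i) ^ 2)
    (hvrec : ∀ k ω (i : Fin d), v (k+1) ω i = β2 (k+1) * v k ω i + (1 - β2 (k+1)) * (g (k+1) ω i) ^ 2)
    (hvhat : ∀ k ω (i : Fin d), vhat k ω i = v k ω i / (1 - (β2 k) ^ (k+1)))
    (hdvec : ∀ k ω (i : Fin d), dvec k ω i = -(m k ω i / (1 - (β1 k) ^ (k+1))) / Real.sqrt (vhat k ω i))
    (hθrec : ∀ k ω, θ (k+1) ω = θ k ω + α k • dvec k ω)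
    (hθmeas : ∀ k, Measurable (θ k)) (hgmeas : ∀ k, Measurable (g k))
    (hunbiased : ∀ k, μ[g k | MeasurableSpace.comap (θ k) inferInstance]
        =ᵐ[μ] fun ω => gradient f (θ k ω))
    (hvar : ∀ k, ∫ ω, ‖g k ω - gradient f (θ k ω)‖ ^ 2 ∂μ ≤ σ2 / b)
    (hGbd : ∀ k, ∀ᵐ ω ∂μ, ‖gradient f (θ k ω)‖ ≤ G)
    (hBbd : ∀ k, ∀ᵐ ω ∂μ, ‖g k ω‖ ≤ B)
    (hDbd : ∀ x k, ∀ᵐ ω ∂μ, ‖θ k ω - x‖ ≤ D x)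
    (hM : ∀ k, ∀ᵐ ω ∂μ, ∀ i, (g k ω i) ^ 2 ≤ M)
    (hvstar : 0 < vstar)
    (hvstarle : ∀ k, ∀ᵐ ω ∂μ, ∀ i, vstar ≤ v k ω i)
    (hβ2mem : ∀ k, β2 k ∈ Set.Ico (0:ℝ) 1)
    (β1c : ℝ) (hβ1c : β1c ∈ Set.Ioo (0:ℝ) 1) (hβ1const : ∀ k, β1 k = β1c)
    (hαdec : ∀ k, α (k+1) ≤ α k)
    (hmono : ∀ k (i : Fin d), ∀ᵐ ω ∂μ, vhat k ω i ≤ vhat (k+1) ω i)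
    (Dtil : EuclideanSpace ℝ (Fin d) → ℝ)
    (hDtil : ∀ x k, ∀ᵐ ω ∂μ, ∀ i, (θ k ω i - x i) ^ 2 ≤ Dtil x)
    :
    ∀ (K : ℕ), 1 ≤ K → ∀ x : EuclideanSpace ℝ (Fin d),
      (1 / (K:ℝ)) * ∑ k ∈ Finset.Icc 1 K, ∫ ω, (inner ℝ (θ k ω - x) (mp k ω) : ℝ) ∂μ ≤
        (d:ℝ) * Dtil x * Real.sqrt M * (1 - β1c ^ (K+1)) / (2 * β1c * α K * Real.sqrt (1 - (β2 K) ^ (K+1)) * (K:ℝ))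
        + (σ2 / b + G ^ 2) / (2 * Real.sqrt vstar * β1c * (1 - β1c) * (K:ℝ)) * ∑ k ∈ Finset.Icc 1 K, α k * Real.sqrt (1 - (β2 k) ^ (k+1))
        + D x * G * ((1 - β1c) / β1c) := by
  intro K hK x
  have hm : ∀ k ω, m k ω = β1c • mp k ω + (1 - β1c) • g k ω := fun k ω => by
    rw [hmrec, hβ1const]
  have hgrad : Measurable (gradient f) :=
    (InnerProductSpace.toDual ℝ _).symm.continuous.measurable.comp (measurable_fderiv ℝ f)
  have hβ := Set.Ioo_subset_Icc_self hβ1c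
  have hm_meas := measurable_momentum hmp0 hm hmpshift hgmeas
  have hm_bd := ae_norm_momentum_le hβ hmp0 hm hmpshift hBbd
  have hm_int : ∀ k, Integrable (fun ω => ‖m k ω‖ ^ 2) μ := fun k =>
    integrable_norm_sq_of_ae_norm_le (hm_meas k).aestronglyMeasurable (hm_bd k)
  have hm2 := integral_norm_sq_momentum_le hβ hmp0 hm hmpshift hm_int
    (fun k => integrable_norm_sq_of_ae_norm_le (hgmeas k).aestronglyMeasurable (hBbd k))
    (fun k => integral_norm_sq_le_of_condExp_comap (hθmeas k) (hgmeas k).aestronglyMeasurable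
      hgrad (hBbd k) (hGbd k) (hunbiased k) (hvar k))
  have hu_meas : ∀ k, AEStronglyMeasurable (fun ω => θ k ω - x) μ := fun k =>
    ((hθmeas k).sub_const x).aestronglyMeasurable
  have hpath : ∀ᵐ ω ∂μ, ∑ k ∈ Finset.Icc 1 K, ⟪θ k ω - x, m k ω⟫_ℝ
      ≤ d * Dtil x * √M * (1 - β1c ^ (K + 1)) / (2 * α K * √(1 - β2 K ^ (K + 1)))
        + ∑ k ∈ Finset.Icc 1 K,
            α k * √(1 - β2 k ^ (k + 1)) / (2 * √vstar * (1 - β1c)) * ‖m k ω‖ ^ 2 := by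
    filter_upwards [ae_all_iff.2 hM, ae_all_iff.2 hvstarle, ae_all_iff.2 (hDtil x),
      ae_all_iff.2 fun k => ae_all_iff.2 (hmono k)] with ω hMω hvω hDω hmonoω
    exact adam_sum_inner_momentum_le (θ := (θ · ω)) (v := (v · ω)) hαpos hαdec hβ1c hβ2mem
      (hv0 ω) (hvrec · ω) hMω hvstar hvω (hvhat · ω) hmonoω
      (fun k i => by rw [hθrec, PiLp.add_apply, PiLp.smul_apply, smul_eq_mul, hdvec, hβ1const])
      hDω K
  have hsum := sum_integral_inner_prev_momentum_le (s := Finset.Icc 1 K)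
    (u := fun k ω => θ k ω - x)
    (a := fun k => α k * √(1 - β2 k ^ (k + 1)) / (2 * √vstar * (1 - β1c)))
    hβ1c (fun k => div_nonneg (mul_nonneg (hαpos k).le (sqrt_nonneg _))
      (mul_nonneg (by positivity) (sub_nonneg.2 hβ1c.2.le))) hm
    (fun k => integrable_inner_of_ae_norm_le (hu_meas k) (hm_meas k).aestronglyMeasurable
      (hDbd x k) (hm_bd k))
    (fun k => integrable_inner_of_ae_norm_le (hu_meas k) (hgmeas k).aestronglyMeasurable
      (hDbd x k) (hBbd k)) hm_int hm2
    (fun k => neg_mul_le_integral_inner_of_condExp_comap (ψ := (· - x)) (hθmeas k)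
      (hgmeas k).aestronglyMeasurable hgrad (measurable_id.sub_const x) (hDbd x k) (hBbd k)
      (hGbd k) (hunbiased k)) hpath
  have hK0 : (0 : ℝ) < K := by exact_mod_cast hK
  have := sqrt_pos.2 (sub_pos.2 (pow_lt_one₀ (hβ2mem K).1 (hβ2mem K).2 K.succ_ne_zero))
  have := sqrt_pos.2 hvstar
  have := hαpos K
  have := sub_pos.2 hβ1c.2
  have := hβ1c.1.ne'
  refine (mul_le_mul_of_nonneg_left hsum (by positivity)).trans (le_of_eq ?_)
  rw [Nat.card_Icc, Nat.add_sub_cancel, ← Finset.sum_div]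
  field_simp

theorem adam_lemmaA6
    {Ω : Type*} [MeasurableSpace Ω] (μ : Measure Ω) [IsProbabilityMeasure μ]
    {d : ℕ} (f : EuclideanSpace ℝ (Fin d) → ℝ)
    (θ m mp v g dvec : ℕ → Ω → EuclideanSpace ℝ (Fin d))
    (vhat : ℕ → Ω → Fin d → ℝ)
    (α β1 β2 : ℕ → ℝ)
    (σ2 b G B M vstar : ℝ)
    (D : EuclideanSpace ℝ (Fin d) → ℝ)
    (hf : ContDiff ℝ 1 f)
    (hb : 0 < b) (hσ2 : 0 ≤ σ2) (hG : 0 < G) (hB : 0 < B)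
    (hαpos : ∀ k, 0 < α k)
    (hmp0 : ∀ ω, mp 0 ω = 0)
    (hmrec : ∀ k ω, m k ω = β1 k • mp k ω + (1 - β1 k) • g k ω)
    (hmpshift : ∀ k ω, mp (k+1) ω = m k ω)
    (hv0 : ∀ ω (i : Fin d), v 0 ω i = (1 - β2 0) * (g 0 ω i) ^ 2)
    (hvrec : ∀ k ω (i : Fin d), v (k+1) ω i = β2 (k+1) * v k ω i + (1 - β2 (k+1)) * (g (k+1) ω i) ^ 2)
    (hvhat : ∀ k ω (i : Fin d), vhat k ω i = v k ω i / (1 - (β2 k) ^ (k+1)))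
    (hdvec : ∀ k ω (i : Fin d), dvec k ω i = -(m k ω i / (1 - (β1 k) ^ (k+1))) / Real.sqrt (vhat k ω i))
    (hθrec : ∀ k ω, θ (k+1) ω = θ k ω + α k • dvec k ω)
    (hθmeas : ∀ k, Measurable (θ k)) (hgmeas : ∀ k, Measurable (g k))
    (hunbiased : ∀ k, μ[g k | MeasurableSpace.comap (θ k) inferInstance]
        =ᵐ[μ] fun ω => gradient f (θ k ω))
    (hvar : ∀ k, ∫ ω, ‖g k ω - gradient f (θ k ω)‖ ^ 2 ∂μ ≤ σ2 / b)
    (hGbd : ∀ k, ∀ᵐ ω ∂μ, ‖gradient f (θ k ω)‖ ≤ G)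
    (hBbd : ∀ k, ∀ᵐ ω ∂μ, ‖g k ω‖ ≤ B)
    (hDpos : ∀ x, 0 < D x)
    (hDbd : ∀ x k, ∀ᵐ ω ∂μ, ‖θ k ω - x‖ ≤ D x)
    (hM : ∀ k, ∀ᵐ ω ∂μ, ∀ i, (g k ω i) ^ 2 ≤ M)
    (hvstar : 0 < vstar)
    (hvstarle : ∀ k, ∀ᵐ ω ∂μ, ∀ i, vstar ≤ v k ω i)
    (hβ2mem : ∀ k, β2 k ∈ Set.Ico (0:ℝ) 1)
    (β1c : ℝ) (hβ1c : β1c ∈ Set.Ioo (0:ℝ) 1) (hβ1const : ∀ k, β1 k = β1c)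
    (hαdec : ∀ k, α (k+1) ≤ α k)
    (hmono : ∀ k (i : Fin d), ∀ᵐ ω ∂μ, vhat k ω i ≤ vhat (k+1) ω i)
    (Dtil : EuclideanSpace ℝ (Fin d) → ℝ)
    (hDtil : ∀ x k, ∀ᵐ ω ∂μ, ∀ i, (θ k ω i - x i) ^ 2 ≤ Dtil x)
    :
    ∀ (K : ℕ), 1 ≤ K → ∀ x : EuclideanSpace ℝ (Fin d),
      (1 / (K:ℝ)) * ∑ k ∈ Finset.Icc 1 K, ∫ ω, (inner ℝ (θ k ω - x) (mp k ω) : ℝ) ∂μ ≤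
        (d:ℝ) * Dtil x * Real.sqrt M * (1 - β1c ^ (K+1)) / (2 * β1c * α K * Real.sqrt (1 - (β2 K) ^ (K+1)) * (K:ℝ))
        + (σ2 / b + G ^ 2) / (2 * Real.sqrt vstar * β1c * (1 - β1c) * (K:ℝ)) * ∑ k ∈ Finset.Icc 1 K, α k * Real.sqrt (1 - (β2 k) ^ (k+1))
        + D x * G * ((1 - β1c) / β1c) :=
  adam_lemmaA6_general μ f θ m mp v g dvec vhat α β1 β2 σ2 b G B M vstar D hαpos hmp0 hmrec hmpshift
    hv0 hvrec hvhat hdvec hθrec hθmeas hgmeas hunbiased hvar hGbd hBbd hDbd hM hvstar hvstarle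
    hβ2mem β1c hβ1c hβ1const hαdec hmono Dtil hDtil
end

section
/- (One-step transfer from m_{k−1} to m_k) For Adam, under assumptions (S1)-(S3) and (A1)-(A2), for all k ∈ ℕ and all θ ∈ ℝ^d: E[(θ_k − θ)ᵀ m_k] ≤ E[(θ_k − θ)ᵀ m_{k−1}] + (1 − β_{1k}) D(θ)(B + √(σ²/b + G²)). -/
open MeasureTheory Filter Real

/-!
Write `h = θ_k - θ`. Since `m_k = β₁ m_{k-1} + (1 - β₁) g_k`, the gap
`E⟪h, m_k⟫ - E⟪h, m_{k-1}⟫` equals `(1 - β₁) (E⟪h, g_k⟫ - E⟪h, m_{k-1}⟫)`.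
Because `h` is `σ(θ_k)`-measurable, the pull-out property of conditional expectation and
unbiasedness give `E⟪h, g_k⟫ = E⟪h, ∇f(θ_k)⟫ ≤ D G ≤ D √(σ²/b + G²)`, while the momentum,
an exponential moving average of gradients bounded by `B`, stays in the ball of radius `B`,
so `-E⟪h, m_{k-1}⟫ ≤ D B`.
-/

section InnerBounds

variable {Ω E : Type*} {mΩ : MeasurableSpace Ω} {μ : Measure Ω}
  [NormedAddCommGroup E] [InnerProductSpace ℝ E] {h u : Ω → E} {C D : ℝ}

theorem ae_norm_inner_le (hD : 0 ≤ D) (hh : ∀ᵐ ω ∂μ, ‖h ω‖ ≤ D) (hu : ∀ᵐ ω ∂μ, ‖u ω‖ ≤ C) :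
    ∀ᵐ ω ∂μ, ‖(inner ℝ (h ω) (u ω) : ℝ)‖ ≤ D * C := by
  filter_upwards [hh, hu] with ω hhω huω
  exact (norm_inner_le_norm _ _).trans (mul_le_mul hhω huω (norm_nonneg _) hD)

theorem integrable_inner_of_norm_le [IsFiniteMeasure μ] (hD : 0 ≤ D)
    (hhm : AEStronglyMeasurable h μ) (hum : AEStronglyMeasurable u μ)
    (hh : ∀ᵐ ω ∂μ, ‖h ω‖ ≤ D) (hu : ∀ᵐ ω ∂μ, ‖u ω‖ ≤ C) :
    Integrable (fun ω => (inner ℝ (h ω) (u ω) : ℝ)) μ :=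
  .of_bound (hhm.inner hum) _ (ae_norm_inner_le hD hh hu)

theorem norm_integral_inner_le [IsProbabilityMeasure μ] (hD : 0 ≤ D)
    (hh : ∀ᵐ ω ∂μ, ‖h ω‖ ≤ D) (hu : ∀ᵐ ω ∂μ, ‖u ω‖ ≤ C) :
    ‖∫ ω, (inner ℝ (h ω) (u ω) : ℝ) ∂μ‖ ≤ D * C := by
  simpa using norm_integral_le_of_norm_le_const (ae_norm_inner_le hD hh hu)

theorem integral_inner_eq_of_condExp_ae_eq [CompleteSpace E] {m : MeasurableSpace Ω}
    (hm : m ≤ mΩ) [SigmaFinite (μ.trim hm)] {ψ : Ω → E} (hψ : μ[u | m] =ᵐ[μ] ψ)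
    (hh : StronglyMeasurable[m] h) (hhu : Integrable (fun ω => (inner ℝ (h ω) (u ω) : ℝ)) μ)
    (hu : Integrable u μ) :
    ∫ ω, (inner ℝ (h ω) (u ω) : ℝ) ∂μ = ∫ ω, (inner ℝ (h ω) (ψ ω) : ℝ) ∂μ := by
  rw [← integral_condExp hm]
  refine integral_congr_ae ?_
  filter_upwards [condExp_bilin_of_stronglyMeasurable_left (innerSL ℝ) hh hhu hu, hψ]
    with ω hpull hψω
  rw [← hψω]
  exact hpull

end InnerBounds

section MovingAverage

variable {Ω E : Type*} {mΩ : MeasurableSpace Ω} {μ : Measure Ω}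
  [NormedAddCommGroup E] [NormedSpace ℝ E] {a g : ℕ → Ω → E} {β : ℕ → ℝ}

theorem aestronglyMeasurable_of_movingAverage (h0 : ∀ ω, a 0 ω = 0)
    (hsucc : ∀ n ω, a (n + 1) ω = β n • a n ω + (1 - β n) • g n ω)
    (hg : ∀ n, AEStronglyMeasurable (g n) μ) (n : ℕ) : AEStronglyMeasurable (a n) μ := by
  induction n with
  | zero => simpa [funext h0] using aestronglyMeasurable_const
  | succ n ih =>
    rw [funext (hsucc n)]
    exact (ih.const_smul (β n)).add ((hg n).const_smul _)

theorem ae_norm_le_of_movingAverage {B : ℝ} (h0 : ∀ ω, a 0 ω = 0)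
    (hsucc : ∀ n ω, a (n + 1) ω = β n • a n ω + (1 - β n) • g n ω)
    (hβ : ∀ n, β n ∈ Set.Icc (0 : ℝ) 1) (hB : 0 ≤ B) (hg : ∀ n, ∀ᵐ ω ∂μ, ‖g n ω‖ ≤ B)
    (n : ℕ) : ∀ᵐ ω ∂μ, ‖a n ω‖ ≤ B := by
  induction n with
  | zero => exact ae_of_all _ fun ω => by simpa [h0 ω] using hB
  | succ n ih =>
    filter_upwards [ih, hg n] with ω haω hgω
    have hball := convex_closedBall (0 : E) B (mem_closedBall_zero_iff.2 haω)
      (mem_closedBall_zero_iff.2 hgω) (hβ n).1 (sub_nonneg.2 (hβ n).2) (add_sub_cancel _ _)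
    rwa [hsucc n ω, ← mem_closedBall_zero_iff]

end MovingAverage

theorem adam_one_step_transfer_general
    {Ω : Type*} [MeasurableSpace Ω] (μ : Measure Ω) [IsProbabilityMeasure μ]
    {d : ℕ} (f : EuclideanSpace ℝ (Fin d) → ℝ)
    (θ m mp g : ℕ → Ω → EuclideanSpace ℝ (Fin d))
    (β1 : ℕ → ℝ)
    (σ2 b G B : ℝ)
    (D : EuclideanSpace ℝ (Fin d) → ℝ)
    (hb : 0 < b) (hσ2 : 0 ≤ σ2) (hB : 0 < B)
    (hβ1mem : ∀ k, β1 k ∈ Set.Ioo (0:ℝ) 1)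
    (hmp0 : ∀ ω, mp 0 ω = 0)
    (hmrec : ∀ k ω, m k ω = β1 k • mp k ω + (1 - β1 k) • g k ω)
    (hmpshift : ∀ k ω, mp (k+1) ω = m k ω)
    (hθmeas : ∀ k, Measurable (θ k)) (hgmeas : ∀ k, Measurable (g k))
    (hunbiased : ∀ k, μ[g k | MeasurableSpace.comap (θ k) inferInstance]
        =ᵐ[μ] fun ω => gradient f (θ k ω))
    (hGbd : ∀ k, ∀ᵐ ω ∂μ, ‖gradient f (θ k ω)‖ ≤ G)
    (hBbd : ∀ k, ∀ᵐ ω ∂μ, ‖g k ω‖ ≤ B)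
    (hDpos : ∀ x, 0 < D x)
    (hDbd : ∀ x k, ∀ᵐ ω ∂μ, ‖θ k ω - x‖ ≤ D x)
    :
    ∀ (k : ℕ) (x : EuclideanSpace ℝ (Fin d)),
      ∫ ω, (inner ℝ (θ k ω - x) (m k ω) : ℝ) ∂μ ≤
        ∫ ω, (inner ℝ (θ k ω - x) (mp k ω) : ℝ) ∂μ
        + (1 - β1 k) * D x * (B + Real.sqrt (σ2 / b + G ^ 2)) := by
  intro k x
  have hD := (hDpos x).le
  have hmpsucc n ω : mp (n + 1) ω = β1 n • mp n ω + (1 - β1 n) • g n ω :=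
    (hmpshift n ω).trans (hmrec n ω)
  have hmp_bd := ae_norm_le_of_movingAverage hmp0 hmpsucc
    (fun n => Set.Ioo_subset_Icc_self (hβ1mem n)) hB.le hBbd k
  have hgk := (hgmeas k).aestronglyMeasurable (μ := μ)
  have hhk := ((hθmeas k).sub_const x).aestronglyMeasurable (μ := μ)
  have hmpk := aestronglyMeasurable_of_movingAverage hmp0 hmpsucc
    (fun n => (hgmeas n).aestronglyMeasurable (μ := μ)) k
  have hint_mp := integrable_inner_of_norm_le hD hhk hmpk (hDbd x k) hmp_bd
  have hint_g := integrable_inner_of_norm_le hD hhk hgk (hDbd x k) (hBbd k)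
  have hsplit : ∫ ω, (inner ℝ (θ k ω - x) (m k ω) : ℝ) ∂μ
      = β1 k * ∫ ω, (inner ℝ (θ k ω - x) (mp k ω) : ℝ) ∂μ
        + (1 - β1 k) * ∫ ω, (inner ℝ (θ k ω - x) (g k ω) : ℝ) ∂μ := by
    simp_rw [hmrec k, inner_add_right, real_inner_smul_right]
    rw [integral_add (hint_mp.const_mul _) (hint_g.const_mul _), integral_const_mul,
      integral_const_mul]
  have hg_le : ∫ ω, (inner ℝ (θ k ω - x) (g k ω) : ℝ) ∂μ ≤ D x * G := by
    rw [integral_inner_eq_of_condExp_ae_eq (hθmeas k).comap_le (hunbiased k)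
      ((measurable_iff_comap_le.2 le_rfl).sub_const x).stronglyMeasurable hint_g
      (.of_bound hgk B (hBbd k))]
    exact le_of_abs_le (norm_integral_inner_le hD (hDbd x k) (hGbd k))
  have hmp_ge := neg_le_of_abs_le (norm_integral_inner_le (μ := μ) hD (hDbd x k) hmp_bd)
  have hG_le : G ≤ √(σ2 / b + G ^ 2) :=
    le_sqrt_of_sq_le (le_add_of_nonneg_left (div_nonneg hσ2 hb.le))
  have hgap : ∫ ω, (inner ℝ (θ k ω - x) (g k ω) : ℝ) ∂μ
      - ∫ ω, (inner ℝ (θ k ω - x) (mp k ω) : ℝ) ∂μ ≤ D x * (B + √(σ2 / b + G ^ 2)) := by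
    linarith [mul_le_mul_of_nonneg_left hG_le hD]
  rw [hsplit]
  linarith [mul_le_mul_of_nonneg_left hgap (sub_nonneg.2 (hβ1mem k).2.le)]

theorem adam_one_step_transfer
    {Ω : Type*} [MeasurableSpace Ω] (μ : Measure Ω) [IsProbabilityMeasure μ]
    {d : ℕ} (f : EuclideanSpace ℝ (Fin d) → ℝ)
    (θ m mp v g dvec : ℕ → Ω → EuclideanSpace ℝ (Fin d))
    (vhat : ℕ → Ω → Fin d → ℝ)
    (α β1 β2 : ℕ → ℝ)
    (σ2 b G B : ℝ)
    (D : EuclideanSpace ℝ (Fin d) → ℝ)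
    (hf : ContDiff ℝ 1 f)
    (hb : 0 < b) (hσ2 : 0 ≤ σ2) (hG : 0 < G) (hB : 0 < B)
    (hαpos : ∀ k, 0 < α k)
    (hβ1mem : ∀ k, β1 k ∈ Set.Ioo (0:ℝ) 1) (hβ2mem : ∀ k, β2 k ∈ Set.Ico (0:ℝ) 1)
    (hmp0 : ∀ ω, mp 0 ω = 0)
    (hmrec : ∀ k ω, m k ω = β1 k • mp k ω + (1 - β1 k) • g k ω)
    (hmpshift : ∀ k ω, mp (k+1) ω = m k ω)
    (hv0 : ∀ ω (i : Fin d), v 0 ω i = (1 - β2 0) * (g 0 ω i) ^ 2)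
    (hvrec : ∀ k ω (i : Fin d), v (k+1) ω i = β2 (k+1) * v k ω i + (1 - β2 (k+1)) * (g (k+1) ω i) ^ 2)
    (hvhat : ∀ k ω (i : Fin d), vhat k ω i = v k ω i / (1 - (β2 k) ^ (k+1)))
    (hdvec : ∀ k ω (i : Fin d), dvec k ω i = -(m k ω i / (1 - (β1 k) ^ (k+1))) / Real.sqrt (vhat k ω i))
    (hθrec : ∀ k ω, θ (k+1) ω = θ k ω + α k • dvec k ω)
    (hθmeas : ∀ k, Measurable (θ k)) (hgmeas : ∀ k, Measurable (g k))
    (hunbiased : ∀ k, μ[g k | MeasurableSpace.comap (θ k) inferInstance]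
        =ᵐ[μ] fun ω => gradient f (θ k ω))
    (hvar : ∀ k, ∫ ω, ‖g k ω - gradient f (θ k ω)‖ ^ 2 ∂μ ≤ σ2 / b)
    (hGbd : ∀ k, ∀ᵐ ω ∂μ, ‖gradient f (θ k ω)‖ ≤ G)
    (hBbd : ∀ k, ∀ᵐ ω ∂μ, ‖g k ω‖ ≤ B)
    (hDpos : ∀ x, 0 < D x)
    (hDbd : ∀ x k, ∀ᵐ ω ∂μ, ‖θ k ω - x‖ ≤ D x)
    :
    ∀ (k : ℕ) (x : EuclideanSpace ℝ (Fin d)),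
      ∫ ω, (inner ℝ (θ k ω - x) (m k ω) : ℝ) ∂μ ≤
        ∫ ω, (inner ℝ (θ k ω - x) (mp k ω) : ℝ) ∂μ
        + (1 - β1 k) * D x * (B + Real.sqrt (σ2 / b + G ^ 2)) :=
  adam_one_step_transfer_general μ f θ m mp g β1 σ2 b G B D hb hσ2 hB hβ1mem hmp0 hmrec hmpshift
    hθmeas hgmeas hunbiased hGbd hBbd hDpos hDbd
end

section
/- (Transfer from m_k to the full gradient) For Adam, under assumptions (S1)-(S3) and (A1)-(A2), for all k ∈ ℕ and all θ ∈ ℝ^d: E[(θ_k − θ)ᵀ ∇f(θ_k)] ≤ E[(θ_k − θ)ᵀ m_k] + (1/β_{1k} + (1 − β_{1k})) D(θ)(B + √(σ²/b + G²)). -/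
/-!
Since `m_k` is an exponential moving average of stochastic gradients started at `0`, it is a
convex combination of them and hence lies a.s. in the ball of radius `B`. Cauchy–Schwarz then bounds
`(θ_k - θ)ᵀ (∇f(θ_k) - m_k)` by `D(θ) (G + B)`, and this is below the stated constant because
`G ≤ √(σ²/b + G²)` and `1 ≤ 1/β + (1 - β)` for `β ∈ (0, 1)`.
-/

open MeasureTheory Filter Real

open scoped RealInnerProductSpace

theorem measurable_gradient {E : Type*} [NormedAddCommGroup E] [InnerProductSpace ℝ E]
    [CompleteSpace E] [MeasurableSpace E] [BorelSpace E] (f : E → ℝ) :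
    Measurable (gradient f) :=
  (InnerProductSpace.toDual ℝ E).symm.continuous.measurable.comp (measurable_fderiv ℝ f)

theorem one_le_one_div_add_one_sub {β : ℝ} (hβ0 : 0 < β) (hβ1 : β ≤ 1) :
    1 ≤ 1 / β + (1 - β) := by
  have : 1 ≤ 1 / β := by rw [le_div_iff₀ hβ0]; linarith
  linarith

section MovingAverage

variable {Ω E : Type*} [NormedAddCommGroup E] [NormedSpace ℝ E] {m mp g : ℕ → Ω → E}
  {β : ℕ → ℝ}

theorem measurable_of_moving_average [MeasurableSpace Ω] [MeasurableSpace E] [BorelSpace E]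
    [SecondCountableTopology E] (hmp0 : ∀ ω, mp 0 ω = 0)
    (hmrec : ∀ k ω, m k ω = β k • mp k ω + (1 - β k) • g k ω)
    (hmpshift : ∀ k ω, mp (k + 1) ω = m k ω) (hg : ∀ k, Measurable (g k)) (k : ℕ) :
    Measurable (m k) := by
  have step : ∀ k, Measurable (mp k) → Measurable (m k) := fun k hmp => by
    rw [funext (hmrec k)]
    exact (hmp.const_smul _).add ((hg k).const_smul _)
  induction k with
  | zero => exact step 0 (by rw [funext hmp0]; exact measurable_const)
  | succ k ih => exact step (k + 1) (by rw [funext (hmpshift k)]; exact ih)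

theorem ae_norm_le_of_moving_average [MeasurableSpace Ω] {μ : Measure Ω} {B : ℝ} (hB : 0 ≤ B)
    (hβ : ∀ k, β k ∈ Set.Icc (0 : ℝ) 1) (hmp0 : ∀ ω, mp 0 ω = 0)
    (hmrec : ∀ k ω, m k ω = β k • mp k ω + (1 - β k) • g k ω)
    (hmpshift : ∀ k ω, mp (k + 1) ω = m k ω) (hg : ∀ k, ∀ᵐ ω ∂μ, ‖g k ω‖ ≤ B) (k : ℕ) :
    ∀ᵐ ω ∂μ, ‖m k ω‖ ≤ B := by
  have step : ∀ k, (∀ᵐ ω ∂μ, ‖mp k ω‖ ≤ B) → ∀ᵐ ω ∂μ, ‖m k ω‖ ≤ B := fun k hmp => by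
    filter_upwards [hmp, hg k] with ω hmpω hgω
    rw [hmrec k ω, ← mem_closedBall_zero_iff]
    exact convex_closedBall (0 : E) B (mem_closedBall_zero_iff.2 hmpω)
      (mem_closedBall_zero_iff.2 hgω) (hβ k).1 (by linarith [(hβ k).2]) (by ring)
  induction k with
  | zero => exact step 0 (.of_forall fun ω => by simpa [hmp0 ω] using hB)
  | succ k ih => exact step (k + 1) (by simpa only [hmpshift k] using ih)

end MovingAverage

section InnerBound

variable {Ω E : Type*} [MeasurableSpace Ω] {μ : Measure Ω} [NormedAddCommGroup E]
  [InnerProductSpace ℝ E] {X Y Z : Ω → E} {D G B : ℝ}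

theorem integrable_inner_of_ae_norm_le_s19 [IsFiniteMeasure μ] (hX : AEStronglyMeasurable X μ)
    (hY : AEStronglyMeasurable Y μ) (hXD : ∀ᵐ ω ∂μ, ‖X ω‖ ≤ D) (hYG : ∀ᵐ ω ∂μ, ‖Y ω‖ ≤ G) :
    Integrable (fun ω => ⟪X ω, Y ω⟫) μ := by
  refine .of_bound (hX.inner hY) (D * G) ?_
  filter_upwards [hXD, hYG] with ω hXω hYω
  calc ‖⟪X ω, Y ω⟫‖ ≤ ‖X ω‖ * ‖Y ω‖ := norm_inner_le_norm _ _
    _ ≤ D * G := mul_le_mul hXω hYω (norm_nonneg _) ((norm_nonneg _).trans hXω)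

theorem integral_inner_le_integral_inner_add [IsProbabilityMeasure μ]
    (hX : AEStronglyMeasurable X μ) (hY : AEStronglyMeasurable Y μ)
    (hZ : AEStronglyMeasurable Z μ) (hXD : ∀ᵐ ω ∂μ, ‖X ω‖ ≤ D) (hYG : ∀ᵐ ω ∂μ, ‖Y ω‖ ≤ G)
    (hZB : ∀ᵐ ω ∂μ, ‖Z ω‖ ≤ B) :
    ∫ ω, ⟪X ω, Y ω⟫ ∂μ ≤ ∫ ω, ⟪X ω, Z ω⟫ ∂μ + D * (G + B) := by
  have hpointwise : ∀ᵐ ω ∂μ, ⟪X ω, Y ω⟫ - ⟪X ω, Z ω⟫ ≤ D * (G + B) := by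
    filter_upwards [hXD, hYG, hZB] with ω hXω hYω hZω
    calc ⟪X ω, Y ω⟫ - ⟪X ω, Z ω⟫ = ⟪X ω, Y ω - Z ω⟫ := (inner_sub_right _ _ _).symm
      _ ≤ ‖X ω‖ * ‖Y ω - Z ω‖ := real_inner_le_norm _ _
      _ ≤ D * (G + B) := mul_le_mul hXω ((norm_sub_le _ _).trans (add_le_add hYω hZω))
          (norm_nonneg _) ((norm_nonneg _).trans hXω)
  have hIY := integrable_inner_of_ae_norm_le_s19 hX hY hXD hYG
  have hIZ := integrable_inner_of_ae_norm_le_s19 hX hZ hXD hZB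
  have hdiff : ∫ ω, (⟪X ω, Y ω⟫ - ⟪X ω, Z ω⟫) ∂μ ≤ D * (G + B) := by
    simpa using integral_mono_ae (hIY.sub hIZ) (integrable_const (D * (G + B))) hpointwise
  rw [integral_sub hIY hIZ] at hdiff
  linarith

end InnerBound


theorem adam_transfer_to_full_gradient_general
    {Ω : Type*} [MeasurableSpace Ω] (μ : Measure Ω) [IsProbabilityMeasure μ]
    {d : ℕ} (f : EuclideanSpace ℝ (Fin d) → ℝ)
    (θ m mp g : ℕ → Ω → EuclideanSpace ℝ (Fin d))
    (β1 : ℕ → ℝ)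
    (σ2 b G B : ℝ)
    (D : EuclideanSpace ℝ (Fin d) → ℝ)
    (hb : 0 < b) (hσ2 : 0 ≤ σ2) (hB : 0 < B)
    (hβ1mem : ∀ k, β1 k ∈ Set.Ioo (0:ℝ) 1)
    (hmp0 : ∀ ω, mp 0 ω = 0)
    (hmrec : ∀ k ω, m k ω = β1 k • mp k ω + (1 - β1 k) • g k ω)
    (hmpshift : ∀ k ω, mp (k+1) ω = m k ω)
    (hθmeas : ∀ k, Measurable (θ k)) (hgmeas : ∀ k, Measurable (g k))
    (hGbd : ∀ k, ∀ᵐ ω ∂μ, ‖gradient f (θ k ω)‖ ≤ G)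
    (hBbd : ∀ k, ∀ᵐ ω ∂μ, ‖g k ω‖ ≤ B)
    (hDpos : ∀ x, 0 < D x)
    (hDbd : ∀ x k, ∀ᵐ ω ∂μ, ‖θ k ω - x‖ ≤ D x)
    :
    ∀ (k : ℕ) (x : EuclideanSpace ℝ (Fin d)),
      ∫ ω, (inner ℝ (θ k ω - x) (gradient f (θ k ω)) : ℝ) ∂μ ≤
        ∫ ω, (inner ℝ (θ k ω - x) (m k ω) : ℝ) ∂μ
        + (1 / β1 k + (1 - β1 k)) * D x * (B + Real.sqrt (σ2 / b + G ^ 2)) := by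
  intro k x
  have hmbd := ae_norm_le_of_moving_average hB.le (fun k => Set.Ioo_subset_Icc_self (hβ1mem k))
    hmp0 hmrec hmpshift hBbd k
  have hinner := integral_inner_le_integral_inner_add
    ((hθmeas k).sub measurable_const).aestronglyMeasurable
    ((measurable_gradient f).comp (hθmeas k)).aestronglyMeasurable
    (measurable_of_moving_average hmp0 hmrec hmpshift hgmeas k).aestronglyMeasurable
    (hDbd x k) (hGbd k) hmbd
  have hG_le : G ≤ √(σ2 / b + G ^ 2) :=
    le_sqrt_of_sq_le (by linarith [div_nonneg hσ2 hb.le])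
  have hcoef := one_le_one_div_add_one_sub (hβ1mem k).1 (hβ1mem k).2.le
  have hD : 0 ≤ D x := (hDpos x).le
  have hS : 0 ≤ B + √(σ2 / b + G ^ 2) := add_nonneg hB.le (sqrt_nonneg _)
  have hconst : D x * (G + B) ≤ (1 / β1 k + (1 - β1 k)) * D x * (B + √(σ2 / b + G ^ 2)) :=
    calc D x * (G + B) ≤ 1 * D x * (B + √(σ2 / b + G ^ 2)) := by
          rw [one_mul, add_comm G]; gcongr
      _ ≤ _ := by gcongr
  exact hinner.trans (add_le_add le_rfl hconst)

theorem adam_transfer_to_full_gradient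
    {Ω : Type*} [MeasurableSpace Ω] (μ : Measure Ω) [IsProbabilityMeasure μ]
    {d : ℕ} (f : EuclideanSpace ℝ (Fin d) → ℝ)
    (θ m mp v g dvec : ℕ → Ω → EuclideanSpace ℝ (Fin d))
    (vhat : ℕ → Ω → Fin d → ℝ)
    (α β1 β2 : ℕ → ℝ)
    (σ2 b G B : ℝ)
    (D : EuclideanSpace ℝ (Fin d) → ℝ)
    (hf : ContDiff ℝ 1 f)
    (hb : 0 < b) (hσ2 : 0 ≤ σ2) (hG : 0 < G) (hB : 0 < B)
    (hαpos : ∀ k, 0 < α k)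
    (hβ1mem : ∀ k, β1 k ∈ Set.Ioo (0:ℝ) 1) (hβ2mem : ∀ k, β2 k ∈ Set.Ico (0:ℝ) 1)
    (hmp0 : ∀ ω, mp 0 ω = 0)
    (hmrec : ∀ k ω, m k ω = β1 k • mp k ω + (1 - β1 k) • g k ω)
    (hmpshift : ∀ k ω, mp (k+1) ω = m k ω)
    (hv0 : ∀ ω (i : Fin d), v 0 ω i = (1 - β2 0) * (g 0 ω i) ^ 2)
    (hvrec : ∀ k ω (i : Fin d), v (k+1) ω i = β2 (k+1) * v k ω i + (1 - β2 (k+1)) * (g (k+1) ω i) ^ 2)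
    (hvhat : ∀ k ω (i : Fin d), vhat k ω i = v k ω i / (1 - (β2 k) ^ (k+1)))
    (hdvec : ∀ k ω (i : Fin d), dvec k ω i = -(m k ω i / (1 - (β1 k) ^ (k+1))) / Real.sqrt (vhat k ω i))
    (hθrec : ∀ k ω, θ (k+1) ω = θ k ω + α k • dvec k ω)
    (hθmeas : ∀ k, Measurable (θ k)) (hgmeas : ∀ k, Measurable (g k))
    (hunbiased : ∀ k, μ[g k | MeasurableSpace.comap (θ k) inferInstance]
        =ᵐ[μ] fun ω => gradient f (θ k ω))
    (hvar : ∀ k, ∫ ω, ‖g k ω - gradient f (θ k ω)‖ ^ 2 ∂μ ≤ σ2 / b)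
    (hGbd : ∀ k, ∀ᵐ ω ∂μ, ‖gradient f (θ k ω)‖ ≤ G)
    (hBbd : ∀ k, ∀ᵐ ω ∂μ, ‖g k ω‖ ≤ B)
    (hDpos : ∀ x, 0 < D x)
    (hDbd : ∀ x k, ∀ᵐ ω ∂μ, ‖θ k ω - x‖ ≤ D x)
    :
    ∀ (k : ℕ) (x : EuclideanSpace ℝ (Fin d)),
      ∫ ω, (inner ℝ (θ k ω - x) (gradient f (θ k ω)) : ℝ) ∂μ ≤
        ∫ ω, (inner ℝ (θ k ω - x) (m k ω) : ℝ) ∂μ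
        + (1 / β1 k + (1 - β1 k)) * D x * (B + Real.sqrt (σ2 / b + G ^ 2)) :=
  adam_transfer_to_full_gradient_general μ f θ m mp g β1 σ2 b G B D hb hσ2 hB hβ1mem hmp0 hmrec
    hmpshift hθmeas hgmeas hGbd hBbd hDpos hDbd
end
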